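/- arXiv:1507.08929 — 10 statements merged into one kernel-verified Lean document; each statement's English description precedes it below -/
import Mathlib

section
/- Consider the randomized posterior matching scheme with RIFS decoding described in the context, and assume condition (P1). Then for every n ≥ 1 the probability of decoding error equals the target error probability: P(Θ_0 ∈ J_n) = 1 − p_e, where membership Θ_0 ∈ J_n is understood for the interval J_n taken modulo 1. -/
open MeasureTheory ProbabilityTheory Filter
open scoped ENNReal ProbabilityTheory

/-- The uniform distribution on `[0,1]`. -/
noncomputable def unif01 : Measure ℝ := volume.restrict (Set.Icc 0 1)

/-- The generalized inverse c.d.f. `F_X⁻¹(v) = inf {x : F_X(x) > v}` of an input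
distribution `PX` on `ℝ`. -/
noncomputable def FXinv (PX : Measure ℝ) (v : ℝ) : ℝ :=
  sInf {x : ℝ | v < (PX (Set.Iic x)).toReal}

/-- The posterior matching kernel `F_{Θ|Y}(θ|y)`: the conditional c.d.f. of `Θ` given `Y`,
obtained from a regular conditional distribution `κ` of `Θ` given `Y`. -/
noncomputable def pmCDF (κ : Kernel ℝ ℝ) (θ y : ℝ) : ℝ := ((κ y) (Set.Iic θ)).toReal

/-- The inverse posterior matching kernel `F⁻¹_{Θ|Y}(v|y) = inf {θ : F_{Θ|Y}(θ|y) > v}`. -/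
noncomputable def pmInv (κ : Kernel ℝ ℝ) (v y : ℝ) : ℝ :=
  sInf {θ : ℝ | v < pmCDF κ θ y}

/-- The history `(Θ_0, X_1^{nx}, Y_1^{ny}, V_1^{nv})` available in the scheme, with the
(infinite) vectors truncated to the indicated lengths (zero beyond them). -/
def hist {Ω : Type*} (Θ X Y V : ℕ → Ω → ℝ) (nx ny nv : ℕ) (ω : Ω) :
    ℝ × (ℕ → ℝ) × (ℕ → ℝ) × (ℕ → ℝ) :=
  (Θ 0 ω,
   fun k => if 1 ≤ k ∧ k ≤ nx then X k ω else 0,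
   fun k => if 1 ≤ k ∧ k ≤ ny then Y k ω else 0,
   fun k => if 1 ≤ k ∧ k ≤ nv then V k ω else 0)

/-- The RIFS decoder: `J_0` is the given initial interval, and
`J_{k+1} = F⁻¹_{Θ|Y}((J_k - V_{n-k}) mod 1 | Y_{n-k})` for `k = 0, …, n-1`
(functions applied to sets element-wise). -/
noncomputable def rifs {Ω : Type*} (κ : Kernel ℝ ℝ) (Y V : ℕ → Ω → ℝ) (J0 : Set ℝ)
    (n : ℕ) (ω : Ω) : ℕ → Set ℝ
  | 0 => J0
  | k + 1 => (fun v => pmInv κ v (Y (n - k) ω)) ''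
      (Int.fract '' ((fun t => t - V (n - k) ω) '' rifs κ Y V J0 n ω k))

/-!
Under (P1), for a.e. output `y` the map `θ ↦ F_{Θ|Y}(θ|y)` is an increasing bijection of
`[0,1)` whose inverse there is `F⁻¹_{Θ|Y}(·|y)`. Hence for `θ ∈ [0,1)`,
`θ ∈ F⁻¹((J - v) mod 1 | y)` iff `(F(θ|y) + v) mod 1 ∈ J`, and unwinding the decoder `n` times
gives `Θ_0 ∈ J_n ↔ Θ_{n+1} ∈ J_0` almost surely.

Every `Θ_m`, `m ≥ 1`, is uniform: `Θ_{m+1} = (W + V_m) mod 1` where `W = F(Θ_m|Y_m)` is a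
function of the past and `V_m` is uniform and independent of it, and adding an independent
uniform variable modulo 1 gives a uniform variable because Haar measure on `ℝ/ℤ` is translation
invariant. So `P(Θ_0 ∈ J_n) = |J_0| = 1 - p_e`.

(P1) is only assumed for the law of `Y_1`, but all `Y_m` have that law: `Y_m` is the channel
output at `X_m = F_X⁻¹(Θ_m)` and `Θ_m` is uniform.
-/

open Set

instance : IsProbabilityMeasure unif01 := ⟨by simp [unif01]⟩

lemma unif01_eq_restrict_Ico : unif01 = volume.restrict (Ico 0 1) :=
  (Measure.restrict_congr_set Ico_ae_eq_Icc).symm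

lemma unif01_Ioo {a b : ℝ} (ha : 0 ≤ a) (hb : b ≤ 1) :
    unif01 (Ioo a b) = ENNReal.ofReal (b - a) := by
  rw [unif01, Measure.restrict_apply measurableSet_Ioo,
    inter_eq_left.2 (Ioo_subset_Icc_self.trans (Icc_subset_Icc ha hb)), Real.volume_Ioo]

lemma ae_mem_Ico_of_map_eq_unif01 {Ω : Type*} [MeasurableSpace Ω] {P : Measure Ω} {Z : Ω → ℝ}
    (hZ : AEMeasurable Z P) (h : P.map Z = unif01) : ∀ᵐ ω ∂P, Z ω ∈ Ico (0:ℝ) 1 := by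
  refine ae_of_ae_map hZ ?_
  rw [h, unif01_eq_restrict_Ico]
  exact ae_restrict_mem measurableSet_Ico

lemma map_fract_const_add_unif01 (w : ℝ) :
    unif01.map (fun v => Int.fract (w + v)) = unif01 := by
  let π : ℝ → UnitAddCircle := (↑)
  let g : UnitAddCircle → ℝ := fun z => (AddCircle.equivIco 1 0 z : ℝ)
  have hπ : MeasurePreserving π unif01 volume := by
    have := UnitAddCircle.measurePreserving_mk 0
    rwa [zero_add, Measure.restrict_congr_set Ioc_ae_eq_Icc] at this
  have hg : Measurable g :=
    measurable_subtype_coe.comp (AddCircle.measurableEquivIco 1 0).measurable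
  have hfract : ∀ x, Int.fract x = g (π x) := fun x => by
    simp [g, π, AddCircle.coe_equivIco_mk_apply]
  have hshift : Measurable fun z : UnitAddCircle => π w + z := measurable_const_add _
  calc unif01.map (fun v => Int.fract (w + v))
      = (unif01.map π).map (g ∘ (π w + ·)) := by
        rw [Measure.map_map (hg.comp hshift) hπ.measurable]
        congr 1; funext v; simp [hfract, π]
    _ = (volume.map (π w + ·)).map g := by
        rw [hπ.map_eq, Measure.map_map hg hshift]
    _ = (unif01.map π).map g := by rw [map_add_left_eq_self, hπ.map_eq]
    _ = unif01 := by
        rw [Measure.map_map hg hπ.measurable, unif01_eq_restrict_Ico]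
        conv_rhs => rw [← Measure.map_id (μ := volume.restrict (Ico (0:ℝ) 1))]
        refine Measure.map_congr (ae_restrict_of_forall_mem measurableSet_Ico fun v hv => ?_)
        simp [← hfract, Int.fract_eq_self.2 hv]

lemma map_fract_add_eq_unif01 {Ω : Type*} [MeasurableSpace Ω] {P : Measure Ω}
    [IsProbabilityMeasure P] {W V : Ω → ℝ} (hW : Measurable W) (hV : Measurable V)
    (hVunif : P.map V = unif01) (hind : IndepFun W V P) :
    P.map (fun ω => Int.fract (W ω + V ω)) = unif01 := by
  have hf : Measurable fun p : ℝ × ℝ => Int.fract (p.1 + p.2) := by fun_prop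
  have : IsProbabilityMeasure (P.map W) := Measure.isProbabilityMeasure_map hW.aemeasurable
  have hjoint : P.map (fun ω => (W ω, V ω)) = (P.map W).prod unif01 := by
    rw [← hVunif]
    exact (indepFun_iff_map_prod_eq_prod_map_map hW.aemeasurable hV.aemeasurable).1 hind
  rw [show (fun ω => Int.fract (W ω + V ω)) = (fun p : ℝ × ℝ => Int.fract (p.1 + p.2)) ∘
      (fun ω => (W ω, V ω)) from rfl, ← Measure.map_map hf (hW.prodMk hV), hjoint]
  ext S hS
  have hslice : ∀ x, unif01 (Prod.mk x ⁻¹' ((fun p : ℝ × ℝ => Int.fract (p.1 + p.2)) ⁻¹' S))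
      = unif01 S := fun x => by
    rw [← preimage_comp, ← Measure.map_apply (by fun_prop) hS]
    exact congrArg (· S) (map_fract_const_add_unif01 x)
  rw [Measure.map_apply hf hS, Measure.prod_apply (hf hS)]
  simp [hslice]

theorem Antitone.measurable_sInf {β : Type*} [LinearOrder β] [TopologicalSpace β]
    [OrderClosedTopology β] [MeasurableSpace β] [BorelSpace β] {S : β → Set ℝ}
    (hS : Antitone S) : Measurable fun v => sInf (S v) := by
  let A := {v | (S v).Nonempty} ∩ {v | BddBelow (S v)}
  have hA : OrdConnected A :=
    (IsLowerSet.ordConnected fun _ _ hvw hw => hw.mono (hS hvw)).inter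
      (IsUpperSet.ordConnected fun _ _ hvw hv => hv.mono (hS hvw))
  refine measurable_of_restrict_of_restrict_compl hA.measurableSet ?_ ?_
  · exact Monotone.measurable fun v w hvw => csInf_le_csInf v.2.2 w.2.1 (hS hvw)
  · -- off `A`, `sInf` takes its junk value `0`
    convert measurable_const (a := (0 : ℝ))
    rename_i v
    rcases not_and_or.1 v.2 with hv | hv
    · simp [not_nonempty_iff_eq_empty.1 hv]
    · exact Real.sInf_of_not_bddBelow hv

lemma measurable_FXinv (PX : Measure ℝ) : Measurable (FXinv PX) :=
  Antitone.measurable_sInf fun _ _ hvw _ hx => hvw.trans_lt hx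

lemma measurable_pmCDF (κ : Kernel ℝ ℝ) [IsSFiniteKernel κ] :
    Measurable fun p : ℝ × ℝ => pmCDF κ p.1 p.2 := by
  have hle : MeasurableSet {q : (ℝ × ℝ) × ℝ | q.2 ≤ q.1.1} :=
    measurableSet_le (by fun_prop) (by fun_prop)
  exact (Kernel.measurable_kernel_prodMk_left
    (κ := κ.comap Prod.snd measurable_snd) hle).ennreal_toReal

lemma map_eq_comp_of_map_prodMk_eq_compProd {Ω α β γ : Type*} [MeasurableSpace Ω]
    [MeasurableSpace α] [MeasurableSpace β] [MeasurableSpace γ] {P : Measure Ω}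
    [IsFiniteMeasure P] {g : Ω → α} {Z : Ω → β} (hg : Measurable g) {f : α → γ}
    (hf : Measurable f) {κ : Kernel γ β} [IsSFiniteKernel κ]
    (h : P.map (fun ω => (g ω, Z ω)) = P.map g ⊗ₘ κ.comap f hf) :
    P.map Z = κ ∘ₘ P.map (f ∘ g) := by
  rw [← Measure.snd_map_prodMk hg, h, Measure.snd_compProd,
    ← Kernel.comp_deterministic_eq_comap, ← Measure.comp_assoc,
    Measure.deterministic_comp_eq_map, Measure.map_map hf hg]

lemma Int.fract_sub_eq_iff_fract_add_eq {s u : ℝ} (v : ℝ) (hs : s ∈ Ico (0:ℝ) 1)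
    (hu : u ∈ Ico (0:ℝ) 1) : Int.fract (s - v) = u ↔ Int.fract (u + v) = s := by
  rw [Int.fract_eq_iff, Int.fract_eq_iff]
  refine ⟨fun ⟨_, _, z, hz⟩ => ⟨hs.1, hs.2, -z, ?_⟩, fun ⟨_, _, z, hz⟩ => ⟨hu.1, hu.2, -z, ?_⟩⟩
  · push_cast; linarith
  · push_cast; linarith

structure IsStrictUnitCDF (F : ℝ → ℝ) : Prop where
  monotone : Monotone F
  continuousOn : ContinuousOn F (Icc 0 1)
  strictMonoOn : StrictMonoOn F (Icc 0 1)
  map_zero : F 0 = 0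
  map_one : F 1 = 1

lemma isStrictUnitCDF_of_integral_rep (μ : Measure ℝ) [IsFiniteMeasure μ] {f : ℝ → ℝ}
    (hf : IntegrableOn f (Icc 0 1))
    (hrep : ∀ θ ∈ Icc (0:ℝ) 1, (μ (Iic θ)).toReal = ∫ t in (0:ℝ)..θ, f t)
    (hsm : StrictMonoOn (fun θ => (μ (Iic θ)).toReal) (Icc 0 1))
    (h1 : (μ (Iic 1)).toReal = 1) : IsStrictUnitCDF fun θ => (μ (Iic θ)).toReal where
  monotone _ _ hst :=
    ENNReal.toReal_mono (measure_ne_top _ _) (measure_mono (Iic_subset_Iic.2 hst))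
  continuousOn := by
    have h := intervalIntegral.continuousOn_primitive_interval (μ := volume) (a := 0) (b := 1)
      (by rwa [uIcc_of_le zero_le_one])
    rw [uIcc_of_le zero_le_one] at h
    exact h.congr hrep
  strictMonoOn := hsm
  map_zero := by rw [hrep 0 (left_mem_Icc.2 zero_le_one), intervalIntegral.integral_same]
  map_one := h1

namespace IsStrictUnitCDF

variable {F : ℝ → ℝ} (hF : IsStrictUnitCDF F)
include hF

lemma mem_Ico {θ : ℝ} (hθ : θ ∈ Ico (0:ℝ) 1) : F θ ∈ Ico (0:ℝ) 1 := by
  refine ⟨hF.map_zero ▸ hF.monotone hθ.1, hF.map_one ▸ ?_⟩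
  exact hF.strictMonoOn (Ico_subset_Icc_self hθ) (right_mem_Icc.2 zero_le_one) hθ.2

lemma exists_mem_Ico_eq {v : ℝ} (hv : v ∈ Ico (0:ℝ) 1) : ∃ c ∈ Ico (0:ℝ) 1, F c = v := by
  obtain ⟨c, hc, hFc⟩ := intermediate_value_Icc zero_le_one hF.continuousOn
    (by rw [hF.map_zero, hF.map_one]; exact Ico_subset_Icc_self hv)
  refine ⟨c, ⟨hc.1, lt_of_le_of_ne hc.2 ?_⟩, hFc⟩
  rintro rfl
  exact hv.2.ne (hFc.symm.trans hF.map_one)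

lemma sInf_lt_eq {v c : ℝ} (hc : c ∈ Ico (0:ℝ) 1) (hFc : F c = v) :
    sInf {t | v < F t} = c := by
  subst hFc
  have hlb : c ∈ lowerBounds {t | F c < F t} := fun t ht => by
    by_contra! htc
    rcases le_or_gt t 0 with ht0 | ht0
    · exact (hF.monotone (ht0.trans hc.1)).not_gt ht
    · exact ht.not_gt
        (hF.strictMonoOn ⟨ht0.le, (htc.trans hc.2).le⟩ (Ico_subset_Icc_self hc) htc)
  have hsub : Ioc c 1 ⊆ {t | F c < F t} := fun t ht =>
    hF.strictMonoOn (Ico_subset_Icc_self hc) ⟨hc.1.trans ht.1.le, ht.2⟩ ht.1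
  refine le_antisymm ?_ (le_csInf ((nonempty_Ioc.2 hc.2).mono hsub) hlb)
  exact (csInf_le_csInf ⟨c, hlb⟩ (nonempty_Ioc.2 hc.2) hsub).trans_eq (csInf_Ioc hc.2)

lemma sInf_lt_mem_Ico {v : ℝ} (hv : v ∈ Ico (0:ℝ) 1) : sInf {t | v < F t} ∈ Ico (0:ℝ) 1 := by
  obtain ⟨c, hc, hFc⟩ := hF.exists_mem_Ico_eq hv
  rwa [hF.sInf_lt_eq hc hFc]

lemma sInf_lt_eq_iff {v θ : ℝ} (hv : v ∈ Ico (0:ℝ) 1) (hθ : θ ∈ Ico (0:ℝ) 1) :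
    sInf {t | v < F t} = θ ↔ v = F θ := by
  refine ⟨fun h => ?_, fun h => hF.sInf_lt_eq hθ h.symm⟩
  obtain ⟨c, hc, hFc⟩ := hF.exists_mem_Ico_eq hv
  rw [hF.sInf_lt_eq hc hFc] at h
  rw [← hFc, h]

lemma image_sInf_lt_subset_Ico (T : Set ℝ) :
    (fun u => sInf {t | u < F t}) '' (Int.fract '' T) ⊆ Ico (0:ℝ) 1 := by
  rintro _ ⟨_, ⟨x, _, rfl⟩, rfl⟩
  exact hF.sInf_lt_mem_Ico ⟨Int.fract_nonneg x, Int.fract_lt_one x⟩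

lemma mem_image_sInf_lt_iff {S : Set ℝ} (hS : S ⊆ Ico (0:ℝ) 1) (v : ℝ) {θ : ℝ}
    (hθ : θ ∈ Ico (0:ℝ) 1) :
    θ ∈ (fun u => sInf {t | u < F t}) '' (Int.fract '' ((fun t => t - v) '' S))
      ↔ Int.fract (F θ + v) ∈ S := by
  have key : ∀ s ∈ S, sInf {t | Int.fract (s - v) < F t} = θ ↔ Int.fract (F θ + v) = s :=
    fun s hs => by
      rw [hF.sInf_lt_eq_iff ⟨Int.fract_nonneg _, Int.fract_lt_one _⟩ hθ,
        Int.fract_sub_eq_iff_fract_add_eq v (hS hs) (hF.mem_Ico hθ)]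
  simp only [image_image, mem_image]
  exact ⟨fun ⟨s, hs, h⟩ => (key s hs).1 h ▸ hs, fun h => ⟨_, h, (key _ h).2 rfl⟩⟩

end IsStrictUnitCDF

section RIFS

variable {Ω : Type*} {κ : Kernel ℝ ℝ} {Y V : ℕ → Ω → ℝ} {J0 : Set ℝ} {n : ℕ} {ω : Ω}

lemma rifs_subset_Ico (hJ0 : J0 ⊆ Ico 0 1)
    (hF : ∀ m, 1 ≤ m → m ≤ n → IsStrictUnitCDF fun θ => pmCDF κ θ (Y m ω)) :
    ∀ k ≤ n, rifs κ Y V J0 n ω k ⊆ Ico 0 1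
  | 0, _ => hJ0
  | k + 1, hk => (hF (n - k) (by omega) (by omega)).image_sInf_lt_subset_Ico _

lemma mem_rifs_iff {Θ : ℕ → Ω → ℝ} (hJ0 : J0 ⊆ Ico 0 1)
    (hF : ∀ m, 1 ≤ m → m ≤ n → IsStrictUnitCDF fun θ => pmCDF κ θ (Y m ω))
    (hΘ : ∀ m, 1 ≤ m → m ≤ n → Θ m ω ∈ Ico (0:ℝ) 1)
    (hrec : ∀ m, 1 ≤ m → m ≤ n → Θ (m + 1) ω = Int.fract (pmCDF κ (Θ m ω) (Y m ω) + V m ω)) :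
    ∀ k ≤ n, Θ (n + 1 - k) ω ∈ rifs κ Y V J0 n ω k ↔ Θ (n + 1) ω ∈ J0
  | 0, _ => Iff.rfl
  | k + 1, hk => by
    have hstep := (hF (n - k) (by omega) (by omega)).mem_image_sInf_lt_iff
      (rifs_subset_Ico (V := V) hJ0 hF k (by omega)) (V (n - k) ω)
      (hΘ (n - k) (by omega) (by omega))
    rw [show n + 1 - (k + 1) = n - k by omega]
    -- `rifs` unfolds by one step, and `pmInv κ · y` is by definition the `sInf` in `hstep`
    refine hstep.trans ?_
    rw [← hrec _ (by omega) (by omega), show n - k + 1 = n + 1 - k by omega]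
    exact mem_rifs_iff hJ0 hF hΘ hrec k (by omega)

lemma fract_mem_rifs_iff {Θ : ℕ → Ω → ℝ} (hJ0 : J0 ⊆ Ico 0 1)
    (hF : ∀ m, 1 ≤ m → IsStrictUnitCDF fun θ => pmCDF κ θ (Y m ω))
    (hΘ0 : Θ 0 ω ∈ Ico (0:ℝ) 1) (hΘ1 : Θ 1 ω = Θ 0 ω)
    (hrec : ∀ m, 1 ≤ m → Θ (m + 1) ω = Int.fract (pmCDF κ (Θ m ω) (Y m ω) + V m ω)) :
    Int.fract (Θ 0 ω) ∈ rifs κ Y V J0 n ω n ↔ Θ (n + 1) ω ∈ J0 := by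
  have hΘ : ∀ m, 1 ≤ m → Θ m ω ∈ Ico (0:ℝ) 1
    | 1, _ => hΘ1 ▸ hΘ0
    | m + 2, _ => hrec (m + 1) (by omega) ▸ ⟨Int.fract_nonneg _, Int.fract_lt_one _⟩
  have h := mem_rifs_iff hJ0 (fun m hm _ => hF m hm) (fun m hm _ => hΘ m hm)
    (fun m hm _ => hrec m hm) n le_rfl
  rwa [Nat.add_sub_cancel_left, hΘ1, ← Int.fract_eq_self.2 hΘ0] at h

end RIFS

section Scheme

variable {Ω : Type*} {Θ X Y V : ℕ → Ω → ℝ}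

lemma exists_measurable_eq_comp_hist (κ : Kernel ℝ ℝ) [IsSFiniteKernel κ]
    (hΘ1 : ∀ ω, Θ 1 ω = Θ 0 ω)
    (hrec : ∀ n, 1 ≤ n → ∀ ω, Θ (n + 1) ω = Int.fract (pmCDF κ (Θ n ω) (Y n ω) + V n ω))
    {nx ny nv : ℕ} :
    ∀ k, 1 ≤ k → k ≤ ny + 1 → k ≤ nv + 1 → ∃ φ : ℝ × (ℕ → ℝ) × (ℕ → ℝ) × (ℕ → ℝ) → ℝ,
      Measurable φ ∧ Θ k = φ ∘ hist Θ X Y V nx ny nv := by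
  intro k hk
  induction k, hk using Nat.le_induction with
  | base => exact fun _ _ => ⟨Prod.fst, measurable_fst, funext hΘ1⟩
  | succ k hk ih =>
    intro hky hkv
    obtain ⟨φ, hφ, hΘk⟩ := ih (by omega) (by omega)
    refine ⟨fun h => Int.fract (pmCDF κ (φ h) (h.2.2.1 k) + h.2.2.2 k), ?_, funext fun ω => ?_⟩
    · exact (((measurable_pmCDF κ).comp (hφ.prodMk (by fun_prop))).add (by fun_prop)).fract
    · simp [hrec k hk, hΘk, hist, hk, show k ≤ ny by omega, show k ≤ nv by omega]

variable [MeasurableSpace Ω]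

lemma measurable_hist (hΘ : ∀ n, Measurable (Θ n)) (hX : ∀ n, Measurable (X n))
    (hY : ∀ n, Measurable (Y n)) (hV : ∀ n, Measurable (V n)) (nx ny nv : ℕ) :
    Measurable (hist Θ X Y V nx ny nv) := by
  refine (hΘ 0).prodMk ((measurable_pi_lambda _ fun k => ?_).prodMk
    ((measurable_pi_lambda _ fun k => ?_).prodMk (measurable_pi_lambda _ fun k => ?_))) <;>
  split_ifs <;> simp_all

variable {P : Measure Ω}

lemma ae_forall_isStrictUnitCDF {κ : Kernel ℝ ℝ} (hYm : ∀ n, Measurable (Y n))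
    (hYlaw : ∀ m, 1 ≤ m → P.map (Y m) = P.map (Y 1))
    (hF : ∀ᵐ y ∂(P.map (Y 1)), IsStrictUnitCDF fun θ => pmCDF κ θ y) :
    ∀ᵐ ω ∂P, ∀ m, 1 ≤ m → IsStrictUnitCDF fun θ => pmCDF κ θ (Y m ω) := by
  refine ae_all_iff.2 fun m => eventually_imp_distrib_left.2 fun hm => ?_
  rw [← hYlaw m hm] at hF
  exact ae_of_ae_map (hYm m).aemeasurable hF

variable [IsProbabilityMeasure P]

lemma map_Θ_eq_unif01 (κ : Kernel ℝ ℝ) [IsSFiniteKernel κ] (hΘm : ∀ n, Measurable (Θ n))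
    (hYm : ∀ n, Measurable (Y n)) (hVm : ∀ n, Measurable (V n))
    (hΘ0 : P.map (Θ 0) = unif01) (hΘ1 : ∀ ω, Θ 1 ω = Θ 0 ω)
    (hV : ∀ n, 1 ≤ n → P.map (V n) = unif01 ∧ IndepFun (V n) (hist Θ X Y V n n (n - 1)) P)
    (hrec : ∀ n, 1 ≤ n → ∀ ω, Θ (n + 1) ω = Int.fract (pmCDF κ (Θ n ω) (Y n ω) + V n ω)) :
    ∀ m, 1 ≤ m → P.map (Θ m) = unif01
  | 1, _ => funext hΘ1 ▸ hΘ0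
  | m + 2, _ => by
    obtain ⟨φ, hφ, hΘφ⟩ := exists_measurable_eq_comp_hist (X := X) κ hΘ1 hrec (m + 1)
      (by omega) (nx := m + 1) (ny := m + 1) (nv := m) (by omega) (by omega)
    have hW : (fun ω => pmCDF κ (Θ (m + 1) ω) (Y (m + 1) ω))
        = (fun h => pmCDF κ (φ h) (h.2.2.1 (m + 1))) ∘ hist Θ X Y V (m + 1) (m + 1) m :=
      funext fun ω => by simp [hΘφ, hist]
    rw [funext (hrec (m + 1) (by omega))]
    refine map_fract_add_eq_unif01 ((measurable_pmCDF κ).comp ((hΘm _).prodMk (hYm _)))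
      (hVm _) (hV _ (by omega)).1 ?_
    rw [hW]
    exact ((hV (m + 1) (by omega)).2.comp measurable_id
      ((measurable_pmCDF κ).comp (hφ.prodMk (by fun_prop)))).symm

lemma map_Y_eq_comp (PX : Measure ℝ) (κchan : Kernel ℝ ℝ) [IsSFiniteKernel κchan]
    (hΘm : ∀ n, Measurable (Θ n)) (hYm : ∀ n, Measurable (Y n)) (hVm : ∀ n, Measurable (V n))
    (hX : ∀ n ω, X n ω = FXinv PX (Θ n ω))
    (hchan : ∀ n, 1 ≤ n →
      P.map (fun ω => ((hist Θ X Y V (n - 1) (n - 1) (n - 1) ω, X n ω), Y n ω))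
        = (P.map (fun ω => (hist Θ X Y V (n - 1) (n - 1) (n - 1) ω, X n ω)))
            ⊗ₘ (κchan.comap Prod.snd measurable_snd))
    {m : ℕ} (hm : 1 ≤ m) (hΘunif : P.map (Θ m) = unif01) :
    P.map (Y m) = κchan ∘ₘ unif01.map (FXinv PX) := by
  have hXeq : ∀ k, X k = FXinv PX ∘ Θ k := fun k => funext (hX k)
  have hXm : ∀ k, Measurable (X k) := fun k => hXeq k ▸ (measurable_FXinv PX).comp (hΘm k)
  rw [map_eq_comp_of_map_prodMk_eq_compProd
      ((measurable_hist hΘm hXm hYm hVm _ _ _).prodMk (hXm m)) measurable_snd (hchan m hm),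
    ← hΘunif, Measure.map_map (measurable_FXinv PX) (hΘm m), ← hXeq]
  rfl

end Scheme

theorem statement1_general {Ω : Type*} [MeasurableSpace Ω] (P : Measure Ω) [IsProbabilityMeasure P]
    (PX : Measure ℝ)
    (κchan : Kernel ℝ ℝ) [IsMarkovKernel κchan]
    (κ : Kernel ℝ ℝ) [IsMarkovKernel κ]
    (Θ Y V : ℕ → Ω → ℝ)
    (hΘm : ∀ n, Measurable (Θ n)) (hYm : ∀ n, Measurable (Y n))
    (hVm : ∀ n, Measurable (V n))
    (X : ℕ → Ω → ℝ) (hX : ∀ n ω, X n ω = FXinv PX (Θ n ω))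
    -- the message point is uniform on [0,1] and Θ_1 = Θ_0:
    (hΘ0 : P.map (Θ 0) = unif01) (hΘ1 : ∀ ω, Θ 1 ω = Θ 0 ω)
    -- Y_n is drawn from the channel at X_n, conditionally independent of
    -- (Θ_0, X^{n-1}, Y^{n-1}, V^{n-1}) given X_n:
    (hchan : ∀ n, 1 ≤ n →
      P.map (fun ω => ((hist Θ X Y V (n - 1) (n - 1) (n - 1) ω, X n ω), Y n ω))
        = (P.map (fun ω => (hist Θ X Y V (n - 1) (n - 1) (n - 1) ω, X n ω)))
            ⊗ₘ (κchan.comap Prod.snd measurable_snd))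
    -- V_n ~ Unif[0,1] independent of (Θ_0, X^n, Y^n, V^{n-1}):
    (hV : ∀ n, 1 ≤ n → P.map (V n) = unif01
        ∧ IndepFun (V n) (hist Θ X Y V n n (n - 1)) P)
    -- the randomized posterior matching recursion:
    (hrec : ∀ n, 1 ≤ n → ∀ ω, Θ (n + 1) ω = Int.fract (pmCDF κ (Θ n ω) (Y n ω) + V n ω))
    -- (P1): for a.e. y, θ ↦ F_{Θ|Y}(θ|y) is absolutely continuous and strictly increasing
    -- from [0,1] onto [0,1]:
    (hP1 : ∀ᵐ y ∂(P.map (Y 1)), ∃ f : ℝ → ℝ, (∀ t, 0 ≤ f t) ∧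
      IntegrableOn f (Set.Icc 0 1) ∧
      (∀ θ ∈ Set.Icc (0:ℝ) 1, pmCDF κ θ y = ∫ t in (0:ℝ)..θ, f t) ∧
      StrictMonoOn (fun θ => pmCDF κ θ y) (Set.Icc 0 1) ∧ pmCDF κ 1 y = 1) :
    ∀ pe : ℝ, pe ∈ Set.Ioo (0:ℝ) 1 → ∀ a b : ℝ, 0 ≤ a → b ≤ 1 → b - a = 1 - pe →
      ∀ n : ℕ, 1 ≤ n →
        P {ω | Int.fract (Θ 0 ω) ∈ rifs κ Y V (Set.Ioo a b) n ω n}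
          = ENNReal.ofReal (1 - pe) := by
  intro pe _ a b ha hb hab n _
  have hΘunif := map_Θ_eq_unif01 κ hΘm hYm hVm hΘ0 hΘ1 hV hrec
  have hYlaw : ∀ m, 1 ≤ m → P.map (Y m) = P.map (Y 1) := fun m hm =>
    (map_Y_eq_comp PX κchan hΘm hYm hVm hX hchan hm (hΘunif m hm)).trans
      (map_Y_eq_comp PX κchan hΘm hYm hVm hX hchan le_rfl (hΘunif 1 le_rfl)).symm
  have hF : ∀ᵐ y ∂(P.map (Y 1)), IsStrictUnitCDF fun θ => pmCDF κ θ y :=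
    hP1.mono fun y ⟨_, _, hfi, hrep, hsm, h1⟩ =>
      isStrictUnitCDF_of_integral_rep (κ y) hfi hrep hsm h1
  have hJ0 : Ioo a b ⊆ Ico 0 1 := fun x hx => ⟨ha.trans hx.1.le, hx.2.trans_le hb⟩
  have hdecode : {ω | Int.fract (Θ 0 ω) ∈ rifs κ Y V (Ioo a b) n ω n}
      =ᵐ[P] Θ (n + 1) ⁻¹' Ioo a b := by
    filter_upwards [ae_forall_isStrictUnitCDF hYm hYlaw hF,
      ae_mem_Ico_of_map_eq_unif01 (hΘm 0).aemeasurable hΘ0] with ω hFω hω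
    exact propext (fract_mem_rifs_iff hJ0 hFω hω (hΘ1 ω) fun m hm => hrec m hm ω)
  rw [measure_congr hdecode, ← Measure.map_apply (hΘm _) measurableSet_Ioo,
    hΘunif _ (by omega), unif01_Ioo ha hb, hab]

/-- in the randomized posterior matching scheme over a memoryless channel
`κchan` with input distribution `PX` (message point `Θ_0 ~ Unif[0,1]`, inputs
`X_n = F_X⁻¹(Θ_n)`, outputs drawn from the channel conditionally independently of the past
given `X_n`, fresh independent uniform common randomness `V_n`, and recursion
`Θ_{n+1} = (F_{Θ|Y}(Θ_n|Y_n) + V_n) mod 1` for the PM kernel `κ`, a regular conditional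
distribution of `Θ_1` given `Y_1`), under assumption (P1), the RIFS decoder started from an
interval `J_0 = (a,b) ⊆ (0,1)` of measure `1 - p_e` satisfies
`P(Θ_0 ∈ J_n (mod 1)) = 1 - p_e` for every horizon `n ≥ 1`. -/
theorem statement1 {Ω : Type*} [MeasurableSpace Ω] (P : Measure Ω) [IsProbabilityMeasure P]
    (PX : Measure ℝ) [IsProbabilityMeasure PX]
    (κchan : Kernel ℝ ℝ) [IsMarkovKernel κchan]
    (κ : Kernel ℝ ℝ) [IsMarkovKernel κ]
    (Θ Y V : ℕ → Ω → ℝ)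
    (hΘm : ∀ n, Measurable (Θ n)) (hYm : ∀ n, Measurable (Y n))
    (hVm : ∀ n, Measurable (V n))
    (X : ℕ → Ω → ℝ) (hX : ∀ n ω, X n ω = FXinv PX (Θ n ω))
    -- the message point is uniform on [0,1] and Θ_1 = Θ_0:
    (hΘ0 : P.map (Θ 0) = unif01) (hΘ1 : ∀ ω, Θ 1 ω = Θ 0 ω)
    -- Y_n is drawn from the channel at X_n, conditionally independent of
    -- (Θ_0, X^{n-1}, Y^{n-1}, V^{n-1}) given X_n:
    (hchan : ∀ n, 1 ≤ n →
      P.map (fun ω => ((hist Θ X Y V (n - 1) (n - 1) (n - 1) ω, X n ω), Y n ω))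
        = (P.map (fun ω => (hist Θ X Y V (n - 1) (n - 1) (n - 1) ω, X n ω)))
            ⊗ₘ (κchan.comap Prod.snd measurable_snd))
    -- V_n ~ Unif[0,1] independent of (Θ_0, X^n, Y^n, V^{n-1}):
    (hV : ∀ n, 1 ≤ n → P.map (V n) = unif01
        ∧ IndepFun (V n) (hist Θ X Y V n n (n - 1)) P)
    -- the randomized posterior matching recursion:
    (hrec : ∀ n, 1 ≤ n → ∀ ω, Θ (n + 1) ω = Int.fract (pmCDF κ (Θ n ω) (Y n ω) + V n ω))
    -- κ is a regular conditional distribution of Θ given Y (for the single-letter joint law):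
    (hκ : P.map (fun ω => (Y 1 ω, Θ 1 ω)) = (P.map (Y 1)) ⊗ₘ κ)
    -- (P1): for a.e. y, θ ↦ F_{Θ|Y}(θ|y) is absolutely continuous and strictly increasing
    -- from [0,1] onto [0,1]:
    (hP1 : ∀ᵐ y ∂(P.map (Y 1)), ∃ f : ℝ → ℝ, (∀ t, 0 ≤ f t) ∧
      IntegrableOn f (Set.Icc 0 1) ∧
      (∀ θ ∈ Set.Icc (0:ℝ) 1, pmCDF κ θ y = ∫ t in (0:ℝ)..θ, f t) ∧
      StrictMonoOn (fun θ => pmCDF κ θ y) (Set.Icc 0 1) ∧ pmCDF κ 1 y = 1) :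
    ∀ pe : ℝ, pe ∈ Set.Ioo (0:ℝ) 1 → ∀ a b : ℝ, 0 ≤ a → b ≤ 1 → b - a = 1 - pe →
      ∀ n : ℕ, 1 ≤ n →
        P {ω | Int.fract (Θ 0 ω) ∈ rifs κ Y V (Set.Ioo a b) n ω n}
          = ENNReal.ofReal (1 - pe) :=
  statement1_general P PX κchan κ Θ Y V hΘm hYm hVm X hX hΘ0 hΘ1 hchan hV hrec hP1
end

section
/- Let g : [0,1] → ℝ be continuous, let x₀ ∈ (0,1), and suppose g is differentiable at x₀ with derivative g'(x₀). Then lim_{λ→0⁺} D_λ[g](x₀) = |g'(x₀)|; in particular limsup_{λ→0⁺} D_λ[g](x₀) = |g'(x₀)|. -/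
/-!
Near an interior point `x₀` and for small `λ`, the window `A_λ(x₀)` is just the interval
`[x₀ - λ/2, x₀ + λ/2]` (no wrap-around), and the continuous image of an interval is an interval,
so `D_λ[g](x₀)` is the diameter of `g([x₀ - λ/2, x₀ + λ/2])` divided by `λ`. Differentiability
makes `g` equal to `t ↦ g x₀ + (t - x₀) d` up to `o(λ)` on that window, and the image of the
window under this affine map has diameter `λ |d|`, attained at the two endpoints.
-/

open MeasureTheory Filter
open scoped ENNReal NNReal

/-- The `λ`-smoothed derivative `D_λ[g](x) := λ⁻¹ · Leb*(g(A_λ(x)))`, where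
`A_λ(x) = {t mod 1 : t ∈ [x - λ/2, x + λ/2]}` and `Leb*` is Lebesgue outer measure
(a measure applied to an arbitrary set in Mathlib is its outer measure). -/
noncomputable def smoothD (g : ℝ → ℝ) (lam x : ℝ) : ℝ≥0∞ :=
  volume (g '' (Int.fract '' Set.Icc (x - lam / 2) (x + lam / 2))) / ENNReal.ofReal lam

open Metric Set Topology

lemma Real.volume_eq_ofReal_diam {s : Set ℝ} (hcpt : IsCompact s) (hconn : IsConnected s) :
    volume s = ENNReal.ofReal (diam s) := by
  have hle : sInf s ≤ sSup s :=
    csInf_le_csSup hconn.nonempty hcpt.bddBelow hcpt.bddAbove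
  rw [eq_Icc_of_connected_compact hconn hcpt, Real.volume_Icc, Real.diam_Icc hle]

lemma Int.fract_image_of_subset_Ico {s : Set ℝ} (hs : s ⊆ Ico 0 1) : Int.fract '' s = s :=
  (image_congr fun _ ht => Int.fract_eq_self.2 (hs ht)).trans (image_id s)

lemma smoothD_eq_ofReal_diam_div {g : ℝ → ℝ} {lam x : ℝ} (hlam : 0 < lam)
    (hsub : closedBall x (lam / 2) ⊆ Ico 0 1) (hg : ContinuousOn g (closedBall x (lam / 2))) :
    smoothD g lam x = ENNReal.ofReal (diam (g '' closedBall x (lam / 2)) / lam) := by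
  have hconn : IsConnected (closedBall x (lam / 2)) := by
    rw [Real.closedBall_eq_Icc]
    exact isConnected_Icc (by linarith)
  rw [smoothD, ← Real.closedBall_eq_Icc, Int.fract_image_of_subset_Ico hsub,
    Real.volume_eq_ofReal_diam (isCompact_closedBall x _ |>.image_of_continuousOn hg)
      (hconn.image g hg), ENNReal.ofReal_div_of_pos hlam]

lemma abs_diam_image_closedBall_sub_le {g : ℝ → ℝ} {x₀ d η r : ℝ} (hr : 0 ≤ r)
    (happrox : ∀ t ∈ closedBall x₀ r, |g t - g x₀ - (t - x₀) * d| ≤ η * r) :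
    |diam (g '' closedBall x₀ r) - (2 * r * |d|)| ≤ 2 * η * r := by
  have hηr : 0 ≤ η * r := (abs_nonneg _).trans (happrox x₀ (mem_closedBall_self hr))
  have hdist : ∀ t ∈ closedBall x₀ r, ∀ t' ∈ closedBall x₀ r,
      |(g t - g t') - (t - t') * d| ≤ 2 * η * r := fun t ht t' ht' => by
    have := abs_sub (g t - g x₀ - (t - x₀) * d) (g t' - g x₀ - (t' - x₀) * d)
    calc |(g t - g t') - (t - t') * d|
        = |(g t - g x₀ - (t - x₀) * d) - (g t' - g x₀ - (t' - x₀) * d)| := by ring_nf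
      _ ≤ 2 * η * r := by linarith [happrox t ht, happrox t' ht']
  have hupper : ∀ y ∈ g '' closedBall x₀ r, ∀ y' ∈ g '' closedBall x₀ r,
      dist y y' ≤ 2 * r * |d| + 2 * η * r := by
    rintro _ ⟨t, ht, rfl⟩ _ ⟨t', ht', rfl⟩
    have htt' : |t - t'| ≤ 2 * r := by
      rw [← Real.dist_eq]
      linarith [dist_triangle_right t t' x₀, mem_closedBall.1 ht, mem_closedBall.1 ht']
    have hslope : |(t - t') * d| ≤ 2 * r * |d| := by
      rw [abs_mul]
      exact mul_le_mul_of_nonneg_right htt' (abs_nonneg d)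
    rw [Real.dist_eq]
    linarith [abs_sub_abs_le_abs_sub (g t - g t') ((t - t') * d), hdist t ht t' ht']
  have hbdd : Bornology.IsBounded (g '' closedBall x₀ r) := isBounded_iff.2 ⟨_, hupper⟩
  have hlower : 2 * r * |d| - 2 * η * r ≤ diam (g '' closedBall x₀ r) := by
    have hplus : x₀ + r ∈ closedBall x₀ r := by simp [abs_of_nonneg hr]
    have hminus : x₀ - r ∈ closedBall x₀ r := by simp [abs_of_nonneg hr]
    have hdiam := dist_le_diam_of_mem hbdd (mem_image_of_mem g hplus) (mem_image_of_mem g hminus)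
    have hends := hdist _ hplus _ hminus
    rw [show x₀ + r - (x₀ - r) = 2 * r by ring] at hends
    have hslope : |2 * r * d| = 2 * r * |d| := by
      rw [abs_mul, abs_of_nonneg (by linarith : (0 : ℝ) ≤ 2 * r)]
    rw [Real.dist_eq] at hdiam
    linarith [abs_sub_abs_le_abs_sub (2 * r * d) (g (x₀ + r) - g (x₀ - r)),
      abs_sub_comm (2 * r * d) (g (x₀ + r) - g (x₀ - r))]
  have hdiam_le := diam_le_of_forall_dist_le (by nlinarith [abs_nonneg d]) hupper
  rw [abs_le]
  constructor <;> linarith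

lemma HasDerivAt.tendsto_diam_image_closedBall_div {g : ℝ → ℝ} {x₀ d : ℝ}
    (hd : HasDerivAt g d x₀) :
    Tendsto (fun lam => diam (g '' closedBall x₀ (lam / 2)) / lam) (𝓝[>] 0) (𝓝 |d|) := by
  rw [Metric.tendsto_nhdsWithin_nhds]
  intro ε hε
  obtain ⟨δ, hδ, happrox⟩ := Metric.eventually_nhds_iff.1
    ((hasDerivAt_iff_isLittleO.1 hd).def (half_pos hε))
  refine ⟨2 * δ, by positivity, fun lam (hlam : 0 < lam) hlamδ => ?_⟩
  rw [Real.dist_eq, sub_zero, abs_of_pos hlam] at hlamδ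
  have hest := abs_diam_image_closedBall_sub_le (g := g) (x₀ := x₀) (d := d) (η := ε / 2)
    (by positivity : 0 ≤ lam / 2) fun t ht => by
      rw [mem_closedBall] at ht
      have := happrox (show dist t x₀ < δ by linarith)
      rw [Real.norm_eq_abs, Real.norm_eq_abs, smul_eq_mul, ← Real.dist_eq t x₀] at this
      exact this.trans (by gcongr)
  rw [Real.dist_eq, div_sub' hlam.ne', abs_div, abs_of_pos hlam, div_lt_iff₀ hlam]
  calc |diam (g '' closedBall x₀ (lam / 2)) - (lam * |d|)|
      = |diam (g '' closedBall x₀ (lam / 2)) - (2 * (lam / 2) * |d|)| := by ring_nf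
    _ ≤ 2 * (ε / 2) * (lam / 2) := hest
    _ < ε * lam := by nlinarith

/-- if `g : [0,1] → ℝ` is continuous and differentiable at `x₀ ∈ (0,1)` with
derivative `d`, then `D_λ[g](x₀) → |d|` as `λ → 0⁺`; in particular
`limsup_{λ→0⁺} D_λ[g](x₀) = |d|`. -/
theorem statement2 (g : ℝ → ℝ) (hg : ContinuousOn g (Set.Icc 0 1))
    (x₀ : ℝ) (hx₀ : x₀ ∈ Set.Ioo (0:ℝ) 1) (d : ℝ)
    (hd : HasDerivWithinAt g d (Set.Icc 0 1) x₀) :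
    Tendsto (fun lam => smoothD g lam x₀) (nhdsWithin 0 (Set.Ioi 0))
      (nhds (ENNReal.ofReal |d|)) ∧
    Filter.limsup (fun lam => smoothD g lam x₀) (nhdsWithin 0 (Set.Ioi 0))
      = ENNReal.ofReal |d| := by
  obtain ⟨r, hr, hball⟩ := nhds_basis_closedBall.mem_iff.1 (Ioo_mem_nhds hx₀.1 hx₀.2)
  have heq : ∀ᶠ lam in 𝓝[>] 0,
      ENNReal.ofReal (diam (g '' closedBall x₀ (lam / 2)) / lam) = smoothD g lam x₀ := by
    filter_upwards [Ioo_mem_nhdsGT (by positivity : (0 : ℝ) < 2 * r)] with lam ⟨hlam, hlamr⟩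
    have hsub : closedBall x₀ (lam / 2) ⊆ Ioo 0 1 :=
      (closedBall_subset_closedBall (by linarith)).trans hball
    exact (smoothD_eq_ofReal_diam_div hlam (hsub.trans Ioo_subset_Ico_self)
      (hg.mono (hsub.trans Ioo_subset_Icc_self))).symm
  have hlim : Tendsto (fun lam => smoothD g lam x₀) (𝓝[>] 0) (𝓝 (ENNReal.ofReal |d|)) :=
    ((ENNReal.continuous_ofReal.tendsto _).comp
      (hd.hasDerivAt (Icc_mem_nhds hx₀.1 hx₀.2)).tendsto_diam_image_closedBall_div).congr' heq
  exact ⟨hlim, hlim.limsup_eq⟩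
end

section
/- Let g : [0,1] → ℝ be absolutely continuous and strictly monotone on [0,1], with a.e. derivative g'. Then for every x ∈ [0,1] and every λ ∈ (0,1], D_λ[g](x) = (1/λ)·∫_{−λ/2}^{λ/2} |g'((x+q) − ⌊x+q⌋)| dq; equivalently, D_λ[g](x) = E|g'((x + Q_λ) mod 1)| where Q_λ is uniformly distributed on [−λ/2, λ/2]. -/
/-!
Since `g` is the primitive of `g'` and strictly increasing, `g'` is a.e. nonnegative (Lebesgue
differentiation theorem) and `g` maps `[c, d) ⊆ [0, 1]` onto `[g c, g d)`, whose length is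
`∫_c^d |g'|`. Modulo 1, a window `[a, b]` of length at most one is, up to one point, either an
interval `[a, b) ⊆ [0, 1)` or the union `[a, 1) ∪ [0, b - 1)`, whose images under `g` are
disjoint; adding up and using the 1-periodicity of `|g' ∘ fract|` gives the formula. The
decreasing case follows by replacing `g` with `-g`.
-/

open MeasureTheory Filter
open scoped ENNReal NNReal

open Set

section Primitive

variable {g g' : ℝ → ℝ} {a b : ℝ}

theorem continuousOn_of_eq_add_integral (hint : IntervalIntegrable g' volume a b)
    (hac : ∀ x ∈ Icc a b, g x = g a + ∫ t in a..x, g' t) : ContinuousOn g (Icc a b) :=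
  ((continuousOn_const.add (intervalIntegral.continuousOn_primitive_interval' hint
    left_mem_uIcc)).mono Icc_subset_uIcc).congr hac

theorem integral_eq_sub_of_eq_add_integral (hint : IntervalIntegrable g' volume a b)
    (hac : ∀ x ∈ Icc a b, g x = g a + ∫ t in a..x, g' t) {c d : ℝ} (hc : c ∈ Icc a b)
    (hd : d ∈ Icc a b) : ∫ t in c..d, g' t = g d - g c := by
  have hint_from_a {e : ℝ} (he : e ∈ Icc a b) : IntervalIntegrable g' volume a e :=
    hint.mono_set (uIcc_subset_uIcc left_mem_uIcc (Icc_subset_uIcc he))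
  rw [hac c hc, hac d hd, ← intervalIntegral.integral_interval_sub_left (hint_from_a hd)
    (hint_from_a hc)]
  ring

theorem ae_nonneg_of_monotoneOn_of_eq_add_integral (hint : IntervalIntegrable g' volume a b)
    (hac : ∀ x ∈ Icc a b, g x = g a + ∫ t in a..x, g' t) (hmono : MonotoneOn g (Icc a b)) :
    ∀ᵐ t, t ∈ Icc a b → 0 ≤ g' t := by
  filter_upwards [hint.ae_hasDerivAt_integral, volume.ae_ne a, volume.ae_ne b]
    with t hderiv hta htb ht
  have ht' : t ∈ Ioo a b := ⟨lt_of_le_of_ne ht.1 hta.symm, lt_of_le_of_ne ht.2 htb⟩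
  refine (hderiv (Icc_subset_uIcc ht) a left_mem_uIcc).hasDerivWithinAt.nonneg_of_monotoneOn
    (s := Ioo a b) ?_ ?_
  · simpa using PerfectSpace.univ_preperfect.open_inter isOpen_Ioo t ⟨ht', mem_univ t⟩
  · intro x hx y hy hxy
    have := hmono (Ioo_subset_Icc_self hx) (Ioo_subset_Icc_self hy) hxy
    rw [hac x (Ioo_subset_Icc_self hx), hac y (Ioo_subset_Icc_self hy)] at this
    simpa using this

theorem volume_image_Ico_of_strictMonoOn (hint : IntervalIntegrable g' volume a b)
    (hac : ∀ x ∈ Icc a b, g x = g a + ∫ t in a..x, g' t) (hmono : StrictMonoOn g (Icc a b))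
    {c d : ℝ} (hca : a ≤ c) (hcd : c ≤ d) (hdb : d ≤ b) :
    volume (g '' Ico c d) = ENNReal.ofReal (∫ t in c..d, |g' t|) := by
  have hsub : Icc c d ⊆ Icc a b := Icc_subset_Icc hca hdb
  have hc : c ∈ Icc a b := hsub (left_mem_Icc.2 hcd)
  have hd : d ∈ Icc a b := hsub (right_mem_Icc.2 hcd)
  have habs : ∫ t in c..d, |g' t| = ∫ t in c..d, g' t := by
    refine intervalIntegral.integral_congr_ae ?_
    filter_upwards [ae_nonneg_of_monotoneOn_of_eq_add_integral hint hac hmono.monotoneOn]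
      with t ht htcd
    rw [uIoc_of_le hcd] at htcd
    exact abs_of_nonneg (ht (hsub (Ioc_subset_Icc_self htcd)))
  rw [((continuousOn_of_eq_add_integral hint hac).mono hsub).image_Ico_of_strictMonoOn hcd
    (hmono.mono hsub), Real.volume_Ico, habs, integral_eq_sub_of_eq_add_integral hint hac hc hd]

end Primitive

section Fract

variable {E : Type*} [NormedAddCommGroup E]

theorem Int.image_fract_image_add_intCast (s : Set ℝ) (n : ℤ) :
    Int.fract '' ((· + (n : ℝ)) '' s) = Int.fract '' s := by
  simp only [image_image, Int.fract_add_intCast]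

theorem Int.image_fract_Ico_of_nonneg_of_le_one {c d : ℝ} (hc : 0 ≤ c) (hd : d ≤ 1) :
    Int.fract '' Ico c d = Ico c d := by
  refine (image_congr fun t ht => ?_).trans (image_id _)
  exact Int.fract_eq_self.2 ⟨hc.trans ht.1, ht.2.trans_le hd⟩

theorem Int.image_fract_Ico_of_le_one_le {c d : ℝ} (hc : 0 ≤ c) (hc1 : c ≤ 1) (hd1 : 1 ≤ d)
    (hd : d ≤ 2) : Int.fract '' Ico c d = Ico c 1 ∪ Ico 0 (d - 1) := by
  have hshift : Ico 1 d = (· + ((1 : ℤ) : ℝ)) '' Ico 0 (d - 1) := by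
    rw [image_add_const_Ico]; norm_num
  rw [← Ico_union_Ico_eq_Ico hc1 hd1, image_union, hshift, Int.image_fract_image_add_intCast,
    Int.image_fract_Ico_of_nonneg_of_le_one hc le_rfl,
    Int.image_fract_Ico_of_nonneg_of_le_one le_rfl (by linarith)]

theorem intervalIntegral.integral_comp_fract [NormedSpace ℝ E] {φ : ℝ → E} {c d : ℝ}
    (hc : 0 ≤ c) (hcd : c ≤ d) (hd : d ≤ 1) :
    ∫ t in c..d, φ (Int.fract t) = ∫ t in c..d, φ t := by
  refine intervalIntegral.integral_congr_uIoo fun t ht => ?_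
  rw [uIoo_of_le hcd] at ht
  rw [Int.fract_eq_self.2 ⟨hc.trans ht.1.le, ht.2.trans_le hd⟩]

theorem IntervalIntegrable.comp_fract {φ : ℝ → E} (hφ : IntervalIntegrable φ volume 0 1)
    (c d : ℝ) : IntervalIntegrable (fun t => φ (Int.fract t)) volume c d := by
  refine (Int.fract_periodic ℝ).comp φ |>.intervalIntegrable₀ one_ne_zero ?_ c d
  refine hφ.congr_uIoo fun t ht => ?_
  rw [uIoo_of_le zero_le_one] at ht
  exact congrArg φ (Int.fract_eq_self.2 ⟨ht.1.le, ht.2⟩).symm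

theorem intervalIntegral.integral_comp_fract_add_intCast [NormedSpace ℝ E] (φ : ℝ → E)
    (c d : ℝ) (n : ℤ) :
    ∫ t in (c + n)..(d + n), φ (Int.fract t) = ∫ t in c..d, φ (Int.fract t) := by
  simp only [← intervalIntegral.integral_comp_add_right, Int.fract_add_intCast]

end Fract

section SmoothedDerivative

variable {g g' : ℝ → ℝ}

theorem volume_image_image_fract_Ico (hint : IntervalIntegrable g' volume 0 1)
    (hac : ∀ x ∈ Icc (0 : ℝ) 1, g x = g 0 + ∫ t in (0 : ℝ)..x, g' t)
    (hmono : StrictMonoOn g (Icc 0 1)) {a b : ℝ} (ha0 : 0 ≤ a) (ha1 : a ≤ 1) (hab : a ≤ b)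
    (hba : b ≤ a + 1) :
    volume (g '' (Int.fract '' Ico a b)) = ENNReal.ofReal (∫ t in a..b, |g' (Int.fract t)|) := by
  rcases le_total b 1 with hb1 | hb1
  · rw [Int.image_fract_Ico_of_nonneg_of_le_one ha0 hb1,
      volume_image_Ico_of_strictMonoOn hint hac hmono ha0 hab hb1,
      intervalIntegral.integral_comp_fract (φ := fun t => |g' t|) ha0 hab hb1]
  have hintf := hint.abs.comp_fract
  have hleft : Ico a 1 ⊆ Icc 0 1 := Ico_subset_Icc_self.trans (Icc_subset_Icc ha0 le_rfl)
  have hright : Ico 0 (b - 1) ⊆ Icc 0 1 :=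
    Ico_subset_Icc_self.trans (Icc_subset_Icc le_rfl (by linarith))
  -- the wrapped-around part `[1, b)` lands on `[0, b - 1)`, which lies below `a`
  have hdisj : Disjoint (g '' Ico a 1) (g '' Ico 0 (b - 1)) := by
    rw [disjoint_iff_inter_eq_empty, ← hmono.injOn.image_inter hleft hright, Ico_inter_Ico,
      Ico_eq_empty_of_le ((min_le_right _ _).trans ((by linarith : b - 1 ≤ a).trans
        (le_max_left _ _))), image_empty]
  have hmeas : MeasurableSet (g '' Ico 0 (b - 1)) :=
    measurableSet_Ico.image_of_continuousOn_injOn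
      ((continuousOn_of_eq_add_integral hint hac).mono hright) (hmono.injOn.mono hright)
  have hwrap : ∫ t in (1 : ℝ)..b, |g' (Int.fract t)| = ∫ t in (0 : ℝ)..(b - 1), |g' t| := by
    have := intervalIntegral.integral_comp_fract_add_intCast (fun t => |g' t|) 0 (b - 1) 1
    rw [intervalIntegral.integral_comp_fract (φ := fun t => |g' t|) le_rfl (by linarith)
      (by linarith)] at this
    simpa using this
  have hsplit : ∫ t in a..b, |g' (Int.fract t)|
      = (∫ t in a..1, |g' t|) + ∫ t in (0 : ℝ)..(b - 1), |g' t| := by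
    rw [← intervalIntegral.integral_add_adjacent_intervals (hintf a 1) (hintf 1 b), hwrap,
      intervalIntegral.integral_comp_fract (φ := fun t => |g' t|) ha0 ha1 le_rfl]
  rw [Int.image_fract_Ico_of_le_one_le ha0 ha1 hb1 (by linarith), image_union,
    measure_union hdisj hmeas, volume_image_Ico_of_strictMonoOn hint hac hmono ha0 ha1 le_rfl,
    volume_image_Ico_of_strictMonoOn hint hac hmono le_rfl (by linarith) (by linarith), hsplit,
    ENNReal.ofReal_add (intervalIntegral.integral_nonneg ha1 fun _ _ => abs_nonneg _)
      (intervalIntegral.integral_nonneg (by linarith) fun _ _ => abs_nonneg _)]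

theorem volume_image_image_fract_Icc (hint : IntervalIntegrable g' volume 0 1)
    (hac : ∀ x ∈ Icc (0 : ℝ) 1, g x = g 0 + ∫ t in (0 : ℝ)..x, g' t)
    (hmono : StrictMonoOn g (Icc 0 1)) {a b : ℝ} (hab : a ≤ b) (hba : b ≤ a + 1) :
    volume (g '' (Int.fract '' Icc a b)) = ENNReal.ofReal (∫ t in a..b, |g' (Int.fract t)|) := by
  set n := ⌊a⌋
  have hshift : Ico a b = (· + (n : ℝ)) '' Ico (Int.fract a) (b - n) := by
    rw [image_add_const_Ico, Int.fract_add_floor, sub_add_cancel]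
  have hfa : Int.fract a = a - n := (Int.self_sub_floor a).symm
  calc volume (g '' (Int.fract '' Icc a b))
      = volume (g '' (Int.fract '' Ico a b)) := by
        rw [← Ico_insert_right hab, image_insert_eq, image_insert_eq]
        exact measure_congr (insert_ae_eq_self _ _)
    _ = volume (g '' (Int.fract '' Ico (Int.fract a) (b - n))) := by
        rw [hshift, Int.image_fract_image_add_intCast]
    _ = ENNReal.ofReal (∫ t in (Int.fract a)..(b - n), |g' (Int.fract t)|) :=
        volume_image_image_fract_Ico hint hac hmono (Int.fract_nonneg a)
          (Int.fract_lt_one a).le (by linarith) (by linarith)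
    _ = ENNReal.ofReal (∫ t in a..b, |g' (Int.fract t)|) := by
        rw [← intervalIntegral.integral_comp_fract_add_intCast (fun t => |g' t|) _ _ n,
          Int.fract_add_floor, sub_add_cancel]

theorem smoothD_eq_of_strictMonoOn (hint : IntervalIntegrable g' volume 0 1)
    (hac : ∀ x ∈ Icc (0 : ℝ) 1, g x = g 0 + ∫ t in (0 : ℝ)..x, g' t)
    (hmono : StrictMonoOn g (Icc 0 1)) (x : ℝ) {lam : ℝ} (hlam : lam ∈ Ioc 0 1) :
    smoothD g lam x
      = ENNReal.ofReal
          ((1 / lam) * ∫ q in (-(lam / 2))..(lam / 2), |g' (Int.fract (x + q))|) := by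
  rw [smoothD, volume_image_image_fract_Icc hint hac hmono (by linarith [hlam.1])
      (by linarith [hlam.2]), intervalIntegral.integral_comp_add_left
      (fun t => |g' (Int.fract t)|) x, ← ENNReal.ofReal_div_of_pos hlam.1, one_div_mul_eq_div,
    sub_eq_add_neg]

theorem smoothD_neg (lam x : ℝ) : smoothD (-g) lam x = smoothD g lam x := by
  rw [smoothD, smoothD, ← Measure.measure_neg volume (g '' _)]
  congr 2
  ext y
  simp [neg_eq_iff_eq_neg]

end SmoothedDerivative

/-- if `g : [0,1] → ℝ` is absolutely continuous (i.e. it is the integral of an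
integrable a.e. derivative `g'`) and strictly monotone on `[0,1]`, then for every `x ∈ [0,1]`
and `λ ∈ (0,1]`,
`D_λ[g](x) = (1/λ) ∫_{-λ/2}^{λ/2} |g'((x+q) mod 1)| dq = E|g'((x + Q_λ) mod 1)|`
with `Q_λ ~ Unif[-λ/2, λ/2]`. -/
theorem statement3 (g g' : ℝ → ℝ)
    (hint : IntegrableOn g' (Set.Icc 0 1))
    (hac : ∀ x ∈ Set.Icc (0:ℝ) 1, g x = g 0 + ∫ t in (0:ℝ)..x, g' t)
    (hmono : StrictMonoOn g (Set.Icc 0 1) ∨ StrictAntiOn g (Set.Icc 0 1)) :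
    ∀ x ∈ Set.Icc (0:ℝ) 1, ∀ lam ∈ Set.Ioc (0:ℝ) 1,
      smoothD g lam x
        = ENNReal.ofReal ((1 / lam) * ∫ q in (-(lam/2))..(lam/2), |g' (Int.fract (x + q))|) := by
  intro x _ lam hlam
  have hint : IntervalIntegrable g' volume 0 1 :=
    (intervalIntegrable_iff_integrableOn_Icc_of_le zero_le_one).2 hint
  rcases hmono with hmono | hanti
  · exact smoothD_eq_of_strictMonoOn hint hac hmono x hlam
  · have hac_neg (y : ℝ) (hy : y ∈ Icc (0 : ℝ) 1) :
        (-g) y = (-g) 0 + ∫ t in (0 : ℝ)..y, (-g') t := by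
      simp only [Pi.neg_apply, intervalIntegral.integral_neg, hac y hy]
      ring
    rw [← smoothD_neg, smoothD_eq_of_strictMonoOn hint.neg hac_neg hanti.neg x hlam]
    simp only [Pi.neg_apply, abs_neg]
end

section
/- Let g : [0,1] → ℝ be absolutely continuous on [0,1] with a.e. derivative g'. Then for every a > 0, the Lebesgue outer measure of the set {x ∈ [0,1] : D̄[g](x) > a} is at most 9·a^{-1}·∫₀¹ |g'(x)| dx. Equivalently, if X ~ Unif([0,1]), then P(D̄[g](X) > a) ≤ 9·a^{-1}·E|g'(X)|. -/
open MeasureTheory Filter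
open scoped ENNReal NNReal

/-- `D̄[g](x) := sup_{λ ∈ (0,1)} D_λ[g](x)`. -/
noncomputable def smoothDBar (g : ℝ → ℝ) (x : ℝ) : ℝ≥0∞ :=
  ⨆ lam ∈ Set.Ioo (0:ℝ) 1, smoothD g lam x

/-!
If `g` is the integral of `g'`, the image of an interval has measure at most its diameter, hence
at most `∫ |g'|` over the interval. The wrap-around in `A_λ(x)` is absorbed by extending `|g'|`
periodically: if `ν` has density `t ↦ |g'(fract t)|`, then `D_λ[g](x) ≤ ν([x - λ/2, x + λ/2]) / λ`.
So every `x ∈ [0, 1]` with `D̄[g](x) > a` is the centre of a closed ball `B` of radius `≤ 1/2`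
with `a |B| ≤ ν(B)`, and the Vitali covering lemma (enlargement factor `3`) gives
`a |S| ≤ 3 ν((-1, 2]) = 9 ∫₀¹ |g'|`.
-/

open Set Metric

theorem sub_eq_intervalIntegral_of_eq_add_integral {g g' : ℝ → ℝ} {a b : ℝ}
    (hint : IntegrableOn g' (Icc a b))
    (hac : ∀ x ∈ Icc a b, g x = g a + ∫ t in a..x, g' t) :
    ∀ x ∈ Icc a b, ∀ y ∈ Icc a b, g y - g x = ∫ t in x..y, g' t := by
  intro x hx y hy
  have ha : a ∈ Icc a b := ⟨le_rfl, hx.1.trans hx.2⟩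
  rw [hac y hy, hac x hx, add_sub_add_left_eq_sub, intervalIntegral.integral_interval_sub_left
    (hint.mono_set (uIcc_subset_Icc ha hy)).intervalIntegrable
    (hint.mono_set (uIcc_subset_Icc ha hx)).intervalIntegrable]

theorem volume_image_Icc_le_lintegral {g g' : ℝ → ℝ} {u v : ℝ}
    (hg : ∀ x ∈ Icc u v, ∀ y ∈ Icc u v, g y - g x = ∫ t in x..y, g' t) :
    volume (g '' Icc u v) ≤ ∫⁻ t in Ioc u v, ‖g' t‖ₑ := by
  refine (Real.volume_le_diam _).trans (ediam_image_le_iff.2 fun x hx y hy => ?_)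
  calc edist (g x) (g y) = ‖∫ t in uIoc x y, g' t‖ₑ := by
        rw [edist_comm, edist_eq_enorm_sub, hg x hx y hy, Real.enorm_eq_ofReal_abs,
          Real.enorm_eq_ofReal_abs, intervalIntegral.abs_integral_eq_abs_integral_uIoc]
    _ ≤ ∫⁻ t in uIoc x y, ‖g' t‖ₑ := enorm_integral_le_lintegral_enorm _
    _ ≤ ∫⁻ t in Ioc u v, ‖g' t‖ₑ :=
        lintegral_mono_set (Ioc_subset_Ioc (le_min hx.1 hy.1) (max_le hx.2 hy.2))

noncomputable def fractDensity (f : ℝ → ℝ≥0∞) : Measure ℝ :=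
  volume.withDensity (f ∘ Int.fract)

theorem fractDensity_Ioc (f : ℝ → ℝ≥0∞) (n : ℤ) {p q : ℝ} (hp : n ≤ p)
    (hq : q ≤ n + 1) :
    fractDensity f (Ioc p q) = ∫⁻ t in Ioc (p - n) (q - n), f t := by
  have shift := (measurePreserving_add_right volume (n : ℝ)).setLIntegral_comp_preimage_emb
    (measurableEmbedding_addRight _) (f ∘ Int.fract) (Ioc p q)
  rw [fractDensity, withDensity_apply _ measurableSet_Ioc, ← shift, preimage_add_const_Ioc,
    setLIntegral_congr Ioo_ae_eq_Ioc.symm, setLIntegral_congr Ioo_ae_eq_Ioc.symm]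
  refine setLIntegral_congr_fun measurableSet_Ioo fun t ht => ?_
  rw [Function.comp_apply, Int.fract_add_intCast, Int.fract_eq_self.2 ⟨?_, ?_⟩] <;>
    linarith [ht.1, ht.2]

theorem fractDensity_Ioc_intCast_add_one (f : ℝ → ℝ≥0∞) (n : ℤ) :
    fractDensity f (Ioc n (n + 1)) = ∫⁻ t in Ioc 0 1, f t := by
  rw [fractDensity_Ioc f n le_rfl le_rfl, sub_self, add_sub_cancel_left]

theorem fractDensity_Ioc_intCast_add_natCast (f : ℝ → ℝ≥0∞) (n : ℤ) (k : ℕ) :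
    fractDensity f (Ioc n (n + k)) = k * ∫⁻ t in Ioc 0 1, f t := by
  induction k with
  | zero => simp
  | succ k ih =>
    have hunion : Ioc (n : ℝ) (n + ↑(k + 1))
        = Ioc (n : ℝ) (n + k) ∪ Ioc ((n + k : ℤ) : ℝ) ((n + k : ℤ) + 1) := by
      push_cast
      rw [Ioc_union_Ioc_eq_Ioc (by simp) (by linarith), add_assoc]
    rw [hunion, measure_union (Ioc_disjoint_Ioc_of_le (by push_cast; rfl)) measurableSet_Ioc, ih,
      fractDensity_Ioc_intCast_add_one]
    push_cast
    ring

theorem volume_image_fract_Icc_le {g g' : ℝ → ℝ}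
    (hg : ∀ x ∈ Icc (0:ℝ) 1, ∀ y ∈ Icc (0:ℝ) 1, g y - g x = ∫ t in x..y, g' t)
    {u v : ℝ} (huv : v ≤ u + 1) :
    volume (g '' (Int.fract '' Icc u v)) ≤ fractDensity (fun t => ‖g' t‖ₑ) (Icc u v) := by
  set n := ⌊u⌋
  set m := min v (n + 1)
  have hmn : m ≤ n + 1 := min_le_right _ _
  have hnu : (n : ℝ) ≤ u := Int.floor_le u
  have hun : u < n + 1 := Int.lt_floor_add_one u
  have image_le : ∀ p q : ℝ, 0 ≤ p → q ≤ 1 →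
      volume (g '' Icc p q) ≤ ∫⁻ t in Ioc p q, ‖g' t‖ₑ := fun p q hp hq =>
    volume_image_Icc_le_lintegral fun x hx y hy =>
      hg x ⟨hp.trans hx.1, hx.2.trans hq⟩ y ⟨hp.trans hy.1, hy.2.trans hq⟩
  -- `Icc u v` meets at most the two unit cells `[n, n + 1)` and `[n + 1, n + 2)`
  have hcover : Int.fract '' Icc u v ⊆ Icc (u - n) (m - n) ∪ Icc 0 (v - ↑(n + 1)) := by
    rintro _ ⟨t, ⟨hut, htv⟩, rfl⟩
    rcases lt_or_ge t (n + 1) with ht | ht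
    · left
      rw [Int.fract, Int.floor_eq_iff.2 ⟨hnu.trans hut, ht⟩]
      exact ⟨by linarith, by linarith [show t ≤ m from le_min htv ht.le]⟩
    · right
      rw [Int.fract, (Int.floor_eq_iff (z := n + 1)).2 ⟨by push_cast; linarith,
        by push_cast; linarith⟩]
      exact ⟨by push_cast; linarith, by linarith⟩
  have hdisj : Disjoint (Ioc u m) (Ioc (↑(n + 1)) v) := by
    refine disjoint_left.2 fun t ht ht' => ?_
    push_cast at ht'
    linarith [ht.2, ht'.1]
  calc volume (g '' (Int.fract '' Icc u v))
      ≤ volume (g '' Icc (u - n) (m - n)) + volume (g '' Icc 0 (v - ↑(n + 1))) := by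
        refine (measure_mono ?_).trans (measure_union_le _ _)
        exact (image_mono hcover).trans (image_union _ _ _).subset
    _ ≤ (∫⁻ t in Ioc (u - n) (m - n), ‖g' t‖ₑ)
          + ∫⁻ t in Ioc 0 (v - ↑(n + 1)), ‖g' t‖ₑ :=
        add_le_add (image_le _ _ (by linarith) (by linarith))
          (image_le _ _ le_rfl (by push_cast; linarith))
    _ = fractDensity (fun t => ‖g' t‖ₑ) (Ioc u m ∪ Ioc (↑(n + 1)) v) := by
        rw [measure_union hdisj measurableSet_Ioc, fractDensity_Ioc _ n hnu hmn,
          fractDensity_Ioc _ (n + 1) le_rfl (by push_cast; linarith), sub_self]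
    _ ≤ fractDensity (fun t => ‖g' t‖ₑ) (Icc u v) :=
        measure_mono (union_subset (Ioc_subset_Icc_self.trans
          (Icc_subset_Icc le_rfl (min_le_left _ _)))
          (Ioc_subset_Icc_self.trans (Icc_subset_Icc (by push_cast; linarith) le_rfl)))

theorem exists_closedBall_of_lt_smoothDBar {g g' : ℝ → ℝ}
    (hg : ∀ x ∈ Icc (0:ℝ) 1, ∀ y ∈ Icc (0:ℝ) 1, g y - g x = ∫ t in x..y, g' t)
    {c : ℝ≥0∞} {x : ℝ} (h : c < smoothDBar g x) :
    ∃ r, 0 < r ∧ r < 1 / 2 ∧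
      c * volume (closedBall x r) ≤ fractDensity (fun t => ‖g' t‖ₑ) (closedBall x r) := by
  simp only [smoothDBar, lt_iSup_iff] at h
  obtain ⟨lam, ⟨hlam0, hlam1⟩, hlt⟩ := h
  refine ⟨lam / 2, by linarith, by linarith, ?_⟩
  rw [Real.closedBall_eq_Icc, Real.volume_Icc, show x + lam / 2 - (x - lam / 2) = lam by ring]
  rw [smoothD, ENNReal.lt_div_iff_mul_lt (by simp [hlam0]) (by simp)] at hlt
  exact hlt.le.trans (volume_image_fract_Icc_le hg (by linarith))

theorem mul_volume_le_of_forall_exists_closedBall (ν : Measure ℝ) {S K : Set ℝ}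
    (c : ℝ≥0∞) (R : ℝ) (h : ∀ x ∈ S, ∃ r, 0 < r ∧ r ≤ R ∧ closedBall x r ⊆ K ∧
      c * volume (closedBall x r) ≤ ν (closedBall x r)) :
    c * volume S ≤ 3 * ν K := by
  choose! r hr0 hrR hrK hrν using h
  obtain ⟨U, hUS, hUdisj, hUcover⟩ := Vitali.exists_disjoint_subfamily_covering_enlargement
    (fun x => closedBall x (r x)) S r 2 one_lt_two (fun x hx => (hr0 x hx).le) R hrR
    (fun x hx => nonempty_closedBall.2 (hr0 x hx).le)
  have hUcount : U.Countable := hUdisj.countable_of_nonempty_interior fun x hx => by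
    rw [interior_closedBall _ (hr0 x (hUS hx)).ne']
    exact nonempty_ball.2 (hr0 x (hUS hx))
  -- only the centre `y` must be covered: `dist y x ≤ r y + r x ≤ 3 * r x`
  have hcover : S ⊆ ⋃ x ∈ U, closedBall x (3 * r x) := by
    intro y hy
    obtain ⟨x, hxU, ⟨z, hzy, hzx⟩, hyx⟩ := hUcover y hy
    refine mem_biUnion hxU (mem_closedBall.2 ?_)
    rw [mem_closedBall'] at hzy
    rw [mem_closedBall] at hzx
    linarith [dist_triangle y z x]
  have hvol : ∀ x, volume (closedBall x (3 * r x)) = 3 * volume (closedBall x (r x)) := by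
    intro x
    rw [Real.volume_closedBall, Real.volume_closedBall, mul_left_comm,
      ENNReal.ofReal_mul zero_le_three, ENNReal.ofReal_ofNat]
  calc c * volume S ≤ c * ∑' x : U, volume (closedBall (x : ℝ) (3 * r x)) := by
        gcongr
        exact (measure_mono hcover).trans (measure_biUnion_le _ hUcount _)
    _ = 3 * ∑' x : U, c * volume (closedBall (x : ℝ) (r x)) := by
        simp only [hvol, ENNReal.tsum_mul_left, mul_left_comm]
    _ ≤ 3 * ∑' x : U, ν (closedBall (x : ℝ) (r x)) := by
        gcongr with x
        exact hrν x (hUS x.2)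
    _ = 3 * ν (⋃ x ∈ U, closedBall x (r x)) := by
        rw [measure_biUnion hUcount hUdisj fun _ _ => measurableSet_closedBall]
    _ ≤ 3 * ν K := by
        gcongr
        exact iUnion₂_subset fun x hx => hrK x (hUS hx)

/-- Hardy–Littlewood-type bound: if `g : [0,1] → ℝ` is absolutely continuous
(the integral of an integrable a.e. derivative `g'`), then for every `a > 0` the Lebesgue
outer measure of `{x ∈ [0,1] : D̄[g](x) > a}` is at most `9 a⁻¹ ∫₀¹ |g'|`; equivalently, for
`X ~ Unif[0,1]`, `P(D̄[g](X) > a) ≤ 9 a⁻¹ E|g'(X)|`. -/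
theorem statement4 (g g' : ℝ → ℝ)
    (hint : IntegrableOn g' (Set.Icc 0 1))
    (hac : ∀ x ∈ Set.Icc (0:ℝ) 1, g x = g 0 + ∫ t in (0:ℝ)..x, g' t)
    (a : ℝ) (ha : 0 < a) :
    volume {x ∈ Set.Icc (0:ℝ) 1 | ENNReal.ofReal a < smoothDBar g x}
      ≤ ENNReal.ofReal (9 / a * ∫ x in Set.Icc (0:ℝ) 1, |g' x|) := by
  set S := {x ∈ Icc (0:ℝ) 1 | ENNReal.ofReal a < smoothDBar g x}
  set L := ∫⁻ t in Ioc 0 1, ‖g' t‖ₑ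
  have hg := sub_eq_intervalIntegral_of_eq_add_integral hint hac
  have hballs : ∀ x ∈ S, ∃ r, 0 < r ∧ r ≤ 1 / 2 ∧
      closedBall x r ⊆ Ioc (-1 : ℤ) ((-1 : ℤ) + (3 : ℕ)) ∧
      ENNReal.ofReal a * volume (closedBall x r)
        ≤ fractDensity (fun t => ‖g' t‖ₑ) (closedBall x r) := by
    rintro x ⟨hx, hlt⟩
    obtain ⟨r, hr0, hr, hball⟩ := exists_closedBall_of_lt_smoothDBar hg hlt
    refine ⟨r, hr0, hr.le, ?_, hball⟩
    rw [Real.closedBall_eq_Icc]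
    exact Icc_subset_Ioc (by push_cast; linarith [hx.1]) (by push_cast; linarith [hx.2])
  have hmass : ENNReal.ofReal a * volume S ≤ 9 * L := by
    have := mul_volume_le_of_forall_exists_closedBall _ _ _ hballs
    rwa [fractDensity_Ioc_intCast_add_natCast, Nat.cast_ofNat, ← mul_assoc,
      show (3 * 3 : ℝ≥0∞) = 9 by norm_num] at this
  have hL : ENNReal.ofReal (∫ x in Icc (0:ℝ) 1, |g' x|) = L := by
    simp only [← Real.norm_eq_abs]
    rw [ofReal_integral_norm_eq_lintegral_enorm hint]
    exact setLIntegral_congr Ioc_ae_eq_Icc.symm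
  rw [ENNReal.ofReal_mul (by positivity), hL, ENNReal.ofReal_div_of_pos ha, ENNReal.ofReal_ofNat,
    ← ENNReal.mul_div_right_comm, ENNReal.le_div_iff_mul_le (by simp [ha]) (by simp), mul_comm]
  exact hmass
end

section
/- Let Θ and Y be real random variables on a probability space, and let κ be a regular conditional distribution of Θ given Y. Define the conditional c.d.f. F(θ|y) := κ(y)((−∞,θ]) and its generalized inverse G(v|y) := inf{θ : F(θ|y) > v}. Let V be uniformly distributed on [0,1] and independent of Y. Then the pair (G(V|Y), Y) has the same joint distribution as (Θ, Y). -/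
/-! For a fixed `y`, `G(·|y)` is the quantile function of `κ y`, and on `(0,1)` the event
`G(v|y) ≤ t` lies between `v < F(t|y)` and `v ≤ F(t|y)`; hence `G(V|y)` has law `κ y` when `V` is
uniform (inverse transform sampling). Since `V` is independent of `Y`, the pair `(V, Y)` has law
`Unif(0,1) ⊗ Law(Y)`, so `(G(V|Y), Y)` has law `Law(Y) ⊗ₘ κ` (with coordinates swapped), which is
`Law(Y, Θ)` by the disintegration hypothesis. -/

open MeasureTheory ProbabilityTheory Set Filter
open scoped Topology

namespace ProbabilityTheory

/-- For `v ∉ (0,1)` the set may be empty or unbounded below, so `sInf` returns a junk value. -/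
noncomputable def quantile (ν : Measure ℝ) (v : ℝ) : ℝ := sInf {θ | v < cdf ν θ}

section Quantile

variable {ν : Measure ℝ} {v t : ℝ}

lemma nonempty_setOf_lt_cdf (hv : v < 1) : {θ | v < cdf ν θ}.Nonempty :=
  ((tendsto_cdf_atTop ν).eventually (eventually_gt_nhds hv)).exists

lemma bddBelow_setOf_lt_cdf (hv : 0 < v) : BddBelow {θ | v < cdf ν θ} := by
  obtain ⟨b, hb⟩ := eventually_atBot.mp
    ((tendsto_cdf_atBot ν).eventually (eventually_lt_nhds hv))
  exact ⟨b, fun θ hθ => le_of_not_ge fun hθb => (hb θ hθb).not_gt hθ⟩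

lemma quantile_le_of_lt_cdf (hv : 0 < v) (h : v < cdf ν t) : quantile ν v ≤ t :=
  csInf_le (bddBelow_setOf_lt_cdf hv) h

lemma lt_cdf_of_quantile_lt (hv : v < 1) (h : quantile ν v < t) : v < cdf ν t := by
  obtain ⟨θ, hθ, hθt⟩ := exists_lt_of_csInf_lt (nonempty_setOf_lt_cdf hv) h
  exact hθ.trans_le (monotone_cdf ν hθt.le)

lemma le_cdf_of_quantile_le (hv : v < 1) (h : quantile ν v ≤ t) : v ≤ cdf ν t := by
  have hright : Tendsto (cdf ν) (𝓝[>] t) (𝓝 (cdf ν t)) :=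
    ((cdf ν).right_continuous t).tendsto.mono_left (nhdsWithin_mono t Ioi_subset_Ici_self)
  exact ge_of_tendsto hright (eventually_nhdsWithin_of_forall fun x hx =>
    (lt_cdf_of_quantile_lt hv (h.trans_lt hx)).le)

lemma quantile_le_iff_forall_rat (hv : v ∈ Ioo 0 1) :
    quantile ν v ≤ t ↔ ∀ q : ℚ, t < q → v < cdf ν q := by
  refine ⟨fun h q hq => lt_cdf_of_quantile_lt hv.2 (h.trans_lt hq), fun h => ?_⟩
  by_contra! hlt
  obtain ⟨q, htq, hq⟩ := exists_rat_btwn hlt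
  exact (quantile_le_of_lt_cdf hv.1 (h q htq)).not_gt hq

lemma monotoneOn_quantile : MonotoneOn (quantile ν) (Ioo 0 1) := fun _ hv _ hw hvw =>
  csInf_le_csInf (bddBelow_setOf_lt_cdf hv.1) (nonempty_setOf_lt_cdf hw.2)
    fun _ hθ => hvw.trans_lt hθ

theorem map_volume_restrict_Ioo_quantile [IsProbabilityMeasure ν] : (volume.restrict (Ioo 0 1)).map (quantile ν) = ν := by
  have hmeas : AEMeasurable (quantile ν) (volume.restrict (Ioo 0 1)) :=
    aemeasurable_restrict_of_monotoneOn measurableSet_Ioo monotoneOn_quantile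
  refine Measure.ext_of_Iic _ _ fun t => ?_
  rw [Measure.map_apply_of_aemeasurable hmeas measurableSet_Iic,
    Measure.restrict_apply' measurableSet_Ioo, ← ofReal_cdf ν t]
  apply le_antisymm
  · calc volume (quantile ν ⁻¹' Iic t ∩ Ioo 0 1) ≤ volume (Ioc 0 (cdf ν t)) :=
          measure_mono fun v ⟨hq, hv⟩ => ⟨hv.1, le_cdf_of_quantile_le hv.2 hq⟩
      _ = ENNReal.ofReal (cdf ν t) := by simp
  · calc ENNReal.ofReal (cdf ν t) = volume (Ioo 0 (cdf ν t)) := by simp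
      _ ≤ volume (quantile ν ⁻¹' Iic t ∩ Ioo 0 1) := measure_mono fun v hv =>
          ⟨quantile_le_of_lt_cdf hv.1 hv.2, hv.1, hv.2.trans_le (cdf_le_one ν t)⟩

end Quantile

/-- Precomposing with this retraction onto `(0,1)` gives a jointly measurable version of
`(v, y) ↦ quantile (κ y) v` on `(0,1) × β`. -/
noncomputable def retractIoo (v : ℝ) : ℝ := if v ∈ Ioo 0 1 then v else 1 / 2

lemma retractIoo_mem (v : ℝ) : retractIoo v ∈ Ioo 0 1 := by
  unfold retractIoo
  split_ifs with hv
  exacts [hv, by norm_num]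

lemma retractIoo_of_mem {v : ℝ} (hv : v ∈ Ioo 0 1) : retractIoo v = v := if_pos hv

lemma measurable_retractIoo : Measurable retractIoo :=
  Measurable.ite measurableSet_Ioo measurable_id measurable_const

variable {β : Type*} [MeasurableSpace β]

lemma Kernel.measurable_quantile_retractIoo (κ : Kernel β ℝ) [IsMarkovKernel κ] :
    Measurable fun p : ℝ × β => quantile (κ p.2) (retractIoo p.1) := by
  have hcdf (x : ℝ) : Measurable fun b => cdf (κ b) x := by
    simp_rw [cdf_eq_real, measureReal_def]
    exact (κ.measurable_coe measurableSet_Iic).ennreal_toReal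
  refine measurable_of_Iic fun t => ?_
  have hpre : (fun p : ℝ × β => quantile (κ p.2) (retractIoo p.1)) ⁻¹' Iic t
      = ⋂ (q : ℚ) (_ : t < (q : ℝ)), {p | retractIoo p.1 < cdf (κ p.2) q} := by
    ext p
    simp only [mem_preimage, mem_Iic, mem_iInter, mem_ofPred_eq]
    exact quantile_le_iff_forall_rat (retractIoo_mem p.1)
  rw [hpre]
  exact .iInter fun q => .iInter fun _ =>
    measurableSet_lt (measurable_retractIoo.comp measurable_fst) ((hcdf q).comp measurable_snd)

end ProbabilityTheory

namespace MeasureTheory.Measure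

variable {α β : Type*} [MeasurableSpace α] [MeasurableSpace β]

theorem map_prod_eq_map_swap_compProd {ν : Measure α} [SFinite ν] {μ : Measure β}
    [SFinite μ] {κ : Kernel β α} [IsSFiniteKernel κ] {g : α × β → α} (hg : Measurable g)
    (hgκ : ∀ y, ν.map (fun v => g (v, y)) = κ y) :
    (ν.prod μ).map (fun p => (g p, p.2)) = (μ ⊗ₘ κ).map Prod.swap := by
  ext s hs
  rw [Measure.map_apply (hg.prodMk measurable_snd) hs, Measure.map_apply measurable_swap hs,
    Measure.prod_apply_symm (hg.prodMk measurable_snd hs),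
    Measure.compProd_apply (measurable_swap hs)]
  refine lintegral_congr fun y => ?_
  rw [← hgκ y, Measure.map_apply (f := fun v => g (v, y)) (hg.comp measurable_prodMk_right)
    (measurable_prodMk_left (measurable_swap hs))]
  rfl

theorem map_prod_quantile_eq_map_swap_compProd (μ : Measure β) [SFinite μ]
    (κ : Kernel β ℝ) [IsMarkovKernel κ] :
    ((volume.restrict (Ioo 0 1)).prod μ).map (fun p => (quantile (κ p.2) (retractIoo p.1), p.2))
      = (μ ⊗ₘ κ).map Prod.swap := by
  refine map_prod_eq_map_swap_compProd κ.measurable_quantile_retractIoo fun y => ?_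
  have hret : retractIoo =ᵐ[volume.restrict (Ioo 0 1)] id := by
    filter_upwards [ae_restrict_mem measurableSet_Ioo] with v hv using retractIoo_of_mem hv
  change Measure.map (quantile (κ y) ∘ retractIoo) _ = _
  rw [Measure.map_congr (hret.fun_comp (quantile (κ y))), Function.comp_id,
    map_volume_restrict_Ioo_quantile]

end MeasureTheory.Measure

/-- let `κ` be a regular conditional distribution of `Θ` given `Y` (i.e. a Markov
kernel disintegrating the joint law: `Law(Y,Θ) = Law(Y) ⊗ₘ κ`), let `F(θ|y) := κ(y)((-∞,θ])`
and `G(v|y) := inf{θ : F(θ|y) > v}`. If `V ~ Unif[0,1]` is independent of `Y`, then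
`(G(V|Y), Y)` has the same joint law as `(Θ, Y)`. -/
theorem statement7 {Ω : Type*} [MeasurableSpace Ω] (P : Measure Ω) [IsProbabilityMeasure P]
    (Θ Y V : Ω → ℝ) (hΘ : Measurable Θ) (hY : Measurable Y) (hV : Measurable V)
    (κ : Kernel ℝ ℝ) [IsMarkovKernel κ]
    (hκ : (P.map Y) ⊗ₘ κ = P.map (fun ω => (Y ω, Θ ω)))
    (hVunif : P.map V = volume.restrict (Set.Icc 0 1))
    (hVY : IndepFun V Y P) :
    P.map (fun ω => (sInf {θ : ℝ | V ω < ((κ (Y ω)) (Set.Iic θ)).toReal}, Y ω))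
      = P.map (fun ω => (Θ ω, Y ω)) := by
  have hIcc : volume.restrict (Icc (0 : ℝ) 1) = volume.restrict (Ioo 0 1) :=
    (Measure.restrict_congr_set Ioo_ae_eq_Icc).symm
  have hV01 : ∀ᵐ ω ∂P, V ω ∈ Ioo (0 : ℝ) 1 := by
    refine ae_of_ae_map hV.aemeasurable ?_
    rw [hVunif, hIcc]
    exact ae_restrict_mem measurableSet_Ioo
  have hG : (fun ω => (sInf {θ : ℝ | V ω < ((κ (Y ω)) (Set.Iic θ)).toReal}, Y ω))
      =ᵐ[P] (fun p => (quantile (κ p.2) (retractIoo p.1), p.2)) ∘ fun ω => (V ω, Y ω) := by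
    filter_upwards [hV01] with ω hω
    simp only [Function.comp_apply, retractIoo_of_mem hω, quantile, cdf_eq_real, measureReal_def]
  have hVY_law : P.map (fun ω => (V ω, Y ω)) = (volume.restrict (Ioo 0 1)).prod (P.map Y) := by
    rw [(indepFun_iff_map_prod_eq_prod_map_map hV.aemeasurable hY.aemeasurable).mp hVY, hVunif,
      hIcc]
  have hΘY_law : P.map (fun ω => (Θ ω, Y ω)) = (P.map Y ⊗ₘ κ).map Prod.swap := by
    rw [hκ, Measure.map_map measurable_swap (hY.prodMk hΘ)]
    rfl
  rw [Measure.map_congr hG, ← Measure.map_map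
    (κ.measurable_quantile_retractIoo.prodMk measurable_snd) (hV.prodMk hY), hVY_law, hΘY_law,
    Measure.map_prod_quantile_eq_map_swap_compProd]
end

section
/- Let f : [0,1] → [0,∞) be measurable with ∫₀¹ f = 1 and f > 0 Lebesgue-a.e. Let F(θ) := ∫₀^θ f for θ ∈ [0,1], and let G : [0,1] → [0,1] be its inverse, G(v) := inf{θ ∈ [0,1] : F(θ) > v} for v ∈ [0,1) and G(1) := 1. Then for Lebesgue-a.e. v ∈ (0,1): G is differentiable at v with G'(v) = 1/f(G(v)), and lim_{λ→0⁺} D_λ[G](v) = 1/f(G(v)). -/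
/-!
`F` is an increasing homeomorphism of `[0,1]` and `G` inverts it on `(0,1)`. By the Lebesgue
differentiation theorem `F' = f > 0` almost everywhere, and `G` pushes Lebesgue measure on `(0,1)`
forward to `f dθ`, which is absolutely continuous; so for a.e. `v` the point `G v` is such a good
point, and the inverse function theorem gives `G'(v) = 1 / f(G v)`. For small `λ` the set
`A_λ(v)` is the interval `[v - λ/2, v + λ/2]`, which the continuous monotone `G` maps onto an
interval, so `D_λ[G](v)` is the symmetric difference quotient of `G` at `v`.
-/

open MeasureTheory Filter
open scoped ENNReal NNReal

open Set Topology

theorem intervalIntegral_pos_of_ae_pos {f : ℝ → ℝ} {a b : ℝ} (hab : a < b)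
    (hfi : IntervalIntegrable f volume a b) (hpos : ∀ᵐ x ∂volume.restrict (Ioc a b), 0 < f x) :
    0 < ∫ x in a..b, f x := by
  have hsupp : volume.restrict (Ioc a b) {x | 0 < f x} ≠ 0 := by
    rw [measure_congr (ae_eq_univ.mpr (ae_iff.mp hpos) : {x | 0 < f x} =ᵐ[_] univ)]
    simp [hab]
  simpa using intervalIntegral.integral_lt_integral_of_ae_le_of_measure_setOfPred_lt_ne_zero
    hab.le intervalIntegrable_const hfi (hpos.mono fun x hx ↦ hx.le) hsupp

structure IsIncreasingHomeomorphUnitInterval (F : ℝ → ℝ) : Prop where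
  continuousOn : ContinuousOn F (Icc 0 1)
  strictMonoOn : StrictMonoOn F (Icc 0 1)
  map_zero : F 0 = 0
  map_one : F 1 = 1

theorem isIncreasingHomeomorphUnitInterval_primitive {f : ℝ → ℝ}
    (hfi : IntegrableOn f (Icc 0 1)) (hf1 : ∫ x in Icc (0:ℝ) 1, f x = 1)
    (hfpos : ∀ᵐ x ∂volume.restrict (Icc (0:ℝ) 1), 0 < f x) :
    IsIncreasingHomeomorphUnitInterval (fun θ ↦ ∫ t in (0:ℝ)..θ, f t) where
  continuousOn := by
    simpa [uIcc_of_le zero_le_one] using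
      intervalIntegral.continuousOn_primitive_interval (a := 0) (b := 1) (μ := volume)
        (by rwa [uIcc_of_le zero_le_one])
  strictMonoOn x hx y hy hxy := by
    have hfi' : ∀ {a b}, a ∈ Icc (0:ℝ) 1 → b ∈ Icc (0:ℝ) 1 → IntervalIntegrable f volume a b :=
      fun ha hb ↦ (hfi.mono_set (uIcc_subset_Icc ha hb)).intervalIntegrable
    have hpos : 0 < ∫ t in x..y, f t :=
      intervalIntegral_pos_of_ae_pos hxy (hfi' hx hy) <|
        ae_restrict_of_ae_restrict_of_subset (Ioc_subset_Icc_self.trans (Icc_subset_Icc hx.1 hy.2))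
          hfpos
    have hsub := intervalIntegral.integral_interval_sub_left (hfi' (left_mem_Icc.2 zero_le_one) hy)
      (hfi' (left_mem_Icc.2 zero_le_one) hx)
    dsimp only
    linarith
  map_zero := by simp
  map_one := by
    rw [intervalIntegral.integral_of_le zero_le_one, ← integral_Icc_eq_integral_Ioc, hf1]

theorem le_iff_le_max_zero_min_one {x : ℝ} (hx : x ∈ Ioc 0 1) (a : ℝ) :
    x ≤ a ↔ x ≤ max 0 (min 1 a) := by
  simp only [le_max_iff, le_min_iff, hx.2, true_and, hx.1.not_ge, false_or]

theorem max_zero_min_one_mem_Icc (a : ℝ) : max 0 (min 1 a) ∈ Icc (0:ℝ) 1 :=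
  ⟨le_max_left _ _, max_le zero_le_one (min_le_left _ _)⟩

theorem volume_Iic_inter_Ioo_zero_one {y : ℝ} (hy : y ∈ Icc (0:ℝ) 1) :
    volume (Iic y ∩ Ioo 0 1) = ENNReal.ofReal y := by
  apply le_antisymm
  · calc volume (Iic y ∩ Ioo 0 1) ≤ volume (Icc 0 y) := measure_mono fun x hx ↦ ⟨hx.2.1.le, hx.1⟩
      _ = ENNReal.ofReal y := by simp
  · calc ENNReal.ofReal y = volume (Ioo 0 y) := by simp
      _ ≤ volume (Iic y ∩ Ioo 0 1) := measure_mono fun x hx ↦ ⟨hx.2.le, hx.1, hx.2.trans_le hy.2⟩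

namespace IsIncreasingHomeomorphUnitInterval

variable {F G : ℝ → ℝ} (hF : IsIncreasingHomeomorphUnitInterval F)

include hF

theorem bijOn_Ioo : BijOn F (Ioo 0 1) (Ioo 0 1) := by
  have himage : F '' Ioo 0 1 = Ioo 0 1 := by
    rw [hF.continuousOn.image_Ioo_of_strictMonoOn zero_le_one hF.strictMonoOn, hF.map_zero,
      hF.map_one]
  have hbij := (hF.strictMonoOn.injOn.mono Ioo_subset_Icc_self).bijOn_image
  rwa [himage] at hbij

variable (hG : ∀ v ∈ Ioo (0:ℝ) 1, G v = sInf {θ | θ ∈ Icc (0:ℝ) 1 ∧ v < F θ})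

include hG

theorem leftInvOn : LeftInvOn G F (Ioo 0 1) := by
  intro θ hθ
  have hset : {x | x ∈ Icc (0:ℝ) 1 ∧ F θ < F x} = Ioc θ 1 := by
    ext x
    simp only [mem_Icc, mem_Ioc]
    constructor
    · rintro ⟨hx, hlt⟩
      exact ⟨(hF.strictMonoOn.lt_iff_lt (Ioo_subset_Icc_self hθ) hx).mp hlt, hx.2⟩
    · rintro ⟨hθx, hx1⟩
      have hx : x ∈ Icc (0:ℝ) 1 := ⟨hθ.1.le.trans hθx.le, hx1⟩
      exact ⟨hx, hF.strictMonoOn (Ioo_subset_Icc_self hθ) hx hθx⟩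
  rw [hG _ (hF.bijOn_Ioo.mapsTo hθ), hset, csInf_Ioc hθ.2]

theorem invOn : InvOn G F (Ioo 0 1) (Ioo 0 1) :=
  ⟨hF.leftInvOn hG, hF.bijOn_Ioo.image_eq ▸ (hF.leftInvOn hG).rightInvOn_image⟩

theorem bijOn_inv : BijOn G (Ioo 0 1) (Ioo 0 1) :=
  hF.bijOn_Ioo.symm (hF.invOn hG).symm

theorem inv_le_iff {v θ : ℝ} (hv : v ∈ Ioo 0 1) (hθ : θ ∈ Icc 0 1) : G v ≤ θ ↔ v ≤ F θ := by
  conv_rhs => rw [← (hF.invOn hG).2 hv]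
  exact (hF.strictMonoOn.le_iff_le (Ioo_subset_Icc_self ((hF.bijOn_inv hG).mapsTo hv)) hθ).symm

theorem monotoneOn_inv : MonotoneOn G (Ioo 0 1) := fun _ hv _ hw hvw ↦
  (hF.inv_le_iff hG hv (Ioo_subset_Icc_self ((hF.bijOn_inv hG).mapsTo hw))).mpr <|
    ((hF.invOn hG).2 hw).symm ▸ hvw

theorem aemeasurable_inv : AEMeasurable G (volume.restrict (Ioo 0 1)) :=
  aemeasurable_restrict_of_monotoneOn measurableSet_Ioo (hF.monotoneOn_inv hG)

theorem continuousOn_inv : ContinuousOn G (Ioo 0 1) := by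
  intro v hv
  have hGv := (hF.bijOn_inv hG).mapsTo hv
  refine (continuousAt_of_monotoneOn_of_image_mem_nhds (hF.monotoneOn_inv hG)
    (Ioo_mem_nhds hv.1 hv.2) ?_).continuousWithinAt
  rw [(hF.bijOn_inv hG).image_eq]
  exact Ioo_mem_nhds hGv.1 hGv.2

theorem map_volume_Iic (a : ℝ) :
    (volume.restrict (Ioo 0 1)).map G (Iic a) = ENNReal.ofReal (F (max 0 (min 1 a))) := by
  have hc := max_zero_min_one_mem_Icc a
  have hFc : F (max 0 (min 1 a)) ∈ Icc (0:ℝ) 1 :=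
    ⟨hF.map_zero.symm.trans_le
        (hF.strictMonoOn.monotoneOn (left_mem_Icc.2 zero_le_one) hc hc.1),
      (hF.strictMonoOn.monotoneOn hc (right_mem_Icc.2 zero_le_one) hc.2).trans_eq hF.map_one⟩
  have hpre : G ⁻¹' Iic a ∩ Ioo 0 1 = Iic (F (max 0 (min 1 a))) ∩ Ioo 0 1 := by
    ext v
    simp only [mem_inter_iff, mem_preimage, mem_Iic]
    refine and_congr_left fun hv ↦ ?_
    rw [le_iff_le_max_zero_min_one (Ioo_subset_Ioc_self ((hF.bijOn_inv hG).mapsTo hv)),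
      hF.inv_le_iff hG hv hc]
  rw [Measure.map_apply_of_aemeasurable (hF.aemeasurable_inv hG) measurableSet_Iic,
    Measure.restrict_apply' measurableSet_Ioo, hpre, volume_Iic_inter_Ioo_zero_one hFc]

end IsIncreasingHomeomorphUnitInterval

theorem withDensity_restrict_Ioc_Iic {f : ℝ → ℝ} (hfi : IntegrableOn f (Icc 0 1))
    (hf0 : ∀ᵐ x ∂volume.restrict (Icc (0:ℝ) 1), 0 ≤ f x) (a : ℝ) :
    (volume.restrict (Ioc 0 1)).withDensity (fun t ↦ ENNReal.ofReal (f t)) (Iic a) =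
      ENNReal.ofReal (∫ t in (0:ℝ)..max 0 (min 1 a), f t) := by
  have hc := max_zero_min_one_mem_Icc a
  have hset : Iic a ∩ Ioc 0 1 = Ioc 0 (max 0 (min 1 a)) := by
    rw [← Iic_inter_Ioc_of_le hc.2]
    ext x
    simp only [mem_inter_iff, mem_Iic]
    exact and_congr_left (le_iff_le_max_zero_min_one · a)
  have hsub : Ioc 0 (max 0 (min 1 a)) ⊆ Icc 0 1 :=
    Ioc_subset_Icc_self.trans (Icc_subset_Icc le_rfl hc.2)
  rw [withDensity_apply _ measurableSet_Iic, Measure.restrict_restrict measurableSet_Iic, hset,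
    intervalIntegral.integral_of_le hc.1, ofReal_integral_eq_lintegral_ofReal (hfi.mono_set hsub)
      (ae_restrict_of_ae_restrict_of_subset hsub hf0)]

theorem map_volume_eq_withDensity {f G : ℝ → ℝ} (hfi : IntegrableOn f (Icc 0 1))
    (hf1 : ∫ x in Icc (0:ℝ) 1, f x = 1) (hfpos : ∀ᵐ x ∂volume.restrict (Icc (0:ℝ) 1), 0 < f x)
    (hG : ∀ v ∈ Ioo (0:ℝ) 1, G v = sInf {θ | θ ∈ Icc (0:ℝ) 1 ∧ v < ∫ t in (0:ℝ)..θ, f t}) :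
    (volume.restrict (Ioo 0 1)).map G =
      (volume.restrict (Ioc 0 1)).withDensity (fun t ↦ ENNReal.ofReal (f t)) :=
  Measure.ext_of_Iic _ _ fun a ↦ by
    rw [(isIncreasingHomeomorphUnitInterval_primitive hfi hf1 hfpos).map_volume_Iic hG,
      withDensity_restrict_Ioc_Iic hfi (hfpos.mono fun _ ↦ le_of_lt)]

theorem HasDerivAt.tendsto_symmetric_slope {g : ℝ → ℝ} {g' x : ℝ} (h : HasDerivAt g g' x) :
    Tendsto (fun t ↦ (g (x + t) - g (x - t)) / (2 * t)) (𝓝[≠] 0) (𝓝 g') := by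
  have hneg : Tendsto (fun t : ℝ ↦ -t) (𝓝[≠] 0) (𝓝[≠] 0) :=
    tendsto_nhdsWithin_iff.mpr ⟨by simpa using (tendsto_neg (0:ℝ)).mono_left nhdsWithin_le_nhds,
      eventually_nhdsWithin_of_forall fun t ht ↦ neg_ne_zero.mpr ht⟩
  have hs := h.tendsto_slope_zero
  have hsum := (hs.add (hs.comp hneg)).div_const 2
  rw [add_self_div_two] at hsum
  refine hsum.congr' (eventually_nhdsWithin_of_forall fun t (ht : t ≠ 0) ↦ ?_)
  simp only [Function.comp_apply, smul_eq_mul, ← sub_eq_add_neg]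
  field_simp
  ring

theorem smoothD_eq_of_Icc_subset {g : ℝ → ℝ} {lam x : ℝ} (hlam : 0 < lam)
    (hsub : Icc (x - lam / 2) (x + lam / 2) ⊆ Ico 0 1)
    (hg : MonotoneOn g (Icc (x - lam / 2) (x + lam / 2)))
    (hgc : ContinuousOn g (Icc (x - lam / 2) (x + lam / 2))) :
    smoothD g lam x = ENNReal.ofReal ((g (x + lam / 2) - g (x - lam / 2)) / lam) := by
  have hfract : Int.fract '' Icc (x - lam / 2) (x + lam / 2) = Icc (x - lam / 2) (x + lam / 2) :=
    (EqOn.image_eq fun t ht ↦ Int.fract_eq_self.2 (hsub ht)).trans (image_id _)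
  rw [smoothD, hfract, hgc.image_Icc_of_monotoneOn (by linarith) hg, Real.volume_Icc,
    ENNReal.ofReal_div_of_pos hlam]

theorem tendsto_smoothD_of_hasDerivAt {g : ℝ → ℝ} {g' x : ℝ} {s : Set ℝ} (hx : x ∈ Ioo 0 1)
    (hs : s ∈ 𝓝 x) (hg : MonotoneOn g s) (hgc : ContinuousOn g s) (h : HasDerivAt g g' x) :
    Tendsto (fun lam ↦ smoothD g lam x) (𝓝[>] 0) (𝓝 (ENNReal.ofReal g')) := by
  have hhalf : Tendsto (fun lam : ℝ ↦ lam / 2) (𝓝[>] 0) (𝓝[≠] 0) :=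
    tendsto_nhdsWithin_iff.mpr
      ⟨((continuous_id.div_const 2).tendsto' 0 0 (by simp)).mono_left nhdsWithin_le_nhds,
      eventually_nhdsWithin_of_forall fun lam (hlam : 0 < lam) ↦ (half_pos hlam).ne'⟩
  have hsmall : ∀ᶠ lam in 𝓝[>] 0, Icc (x - lam / 2) (x + lam / 2) ⊆ s ∩ Ioo 0 1 := by
    simpa only [Real.closedBall_eq_Icc] using (hhalf.mono_right nhdsWithin_le_nhds).eventually
      (eventually_closedBall_subset (inter_mem hs (Ioo_mem_nhds hx.1 hx.2)))
  refine (ENNReal.tendsto_ofReal (h.tendsto_symmetric_slope.comp hhalf)).congr' ?_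
  filter_upwards [hsmall, self_mem_nhdsWithin] with lam hsub (hlam : 0 < lam)
  rw [smoothD_eq_of_Icc_subset hlam (hsub.trans (inter_subset_right.trans Ioo_subset_Ico_self))
    (hg.mono (hsub.trans inter_subset_left)) (hgc.mono (hsub.trans inter_subset_left))]
  simp only [Function.comp_apply, mul_div_cancel₀ lam two_ne_zero]

theorem statement8_general (f : ℝ → ℝ)
    (hfi : IntegrableOn f (Set.Icc 0 1))
    (hf1 : ∫ x in Set.Icc (0:ℝ) 1, f x = 1)
    (hfpos : ∀ᵐ x ∂(volume.restrict (Set.Icc (0:ℝ) 1)), 0 < f x)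
    (F G : ℝ → ℝ)
    (hF : ∀ θ, F θ = ∫ t in (0:ℝ)..θ, f t)
    (hG : ∀ v, G v = if v < 1 then sInf {θ | θ ∈ Set.Icc (0:ℝ) 1 ∧ v < F θ} else 1) :
    ∀ᵐ v ∂(volume.restrict (Set.Ioo (0:ℝ) 1)),
      HasDerivAt G (1 / f (G v)) v ∧
      Tendsto (fun lam => smoothD G lam v) (nhdsWithin 0 (Set.Ioi 0))
        (nhds (ENNReal.ofReal (1 / f (G v)))) := by
  obtain rfl : F = fun θ ↦ ∫ t in (0:ℝ)..θ, f t := funext hF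
  have hFh := isIncreasingHomeomorphUnitInterval_primitive hfi hf1 hfpos
  replace hG : ∀ v ∈ Ioo (0:ℝ) 1, G v = sInf {θ | θ ∈ Icc (0:ℝ) 1 ∧ v < ∫ t in (0:ℝ)..θ, f t} :=
    fun v hv ↦ by rw [hG, if_pos hv.2]
  have hgood : ∀ᵐ θ, θ ∈ Ioo (0:ℝ) 1 →
      HasDerivAt (fun θ ↦ ∫ t in (0:ℝ)..θ, f t) (f θ) θ ∧ 0 < f θ := by
    filter_upwards [((intervalIntegrable_iff_integrableOn_Icc_of_le zero_le_one).mpr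
        hfi).ae_hasDerivAt_integral, (ae_restrict_iff' measurableSet_Icc).mp hfpos]
      with θ hderiv hpos hθ
    exact ⟨hderiv (Icc_subset_uIcc (Ioo_subset_Icc_self hθ)) 0 left_mem_uIcc,
      hpos (Ioo_subset_Icc_self hθ)⟩
  have hac : (volume.restrict (Ioo (0:ℝ) 1)).map G ≪ volume :=
    map_volume_eq_withDensity hfi hf1 hfpos hG ▸
      (withDensity_absolutelyContinuous _ _).trans
        (Measure.absolutelyContinuous_of_le Measure.restrict_le_self)
  filter_upwards [ae_of_ae_map (hFh.aemeasurable_inv hG) (hac.ae_le hgood),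
    ae_restrict_mem measurableSet_Ioo] with v hv hv01
  obtain ⟨hFd, hpos⟩ := hv ((hFh.bijOn_inv hG).mapsTo hv01)
  have hnhds : Ioo (0:ℝ) 1 ∈ 𝓝 v := isOpen_Ioo.mem_nhds hv01
  have hGd : HasDerivAt G (1 / f (G v)) v := by
    rw [one_div]
    exact hFd.of_local_left_inverse ((hFh.continuousOn_inv hG).continuousAt hnhds) hpos.ne'
      (eventually_of_mem hnhds (hFh.invOn hG).2)
  exact ⟨hGd, tendsto_smoothD_of_hasDerivAt hv01 hnhds (hFh.monotoneOn_inv hG)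
    (hFh.continuousOn_inv hG) hGd⟩

/-- let `f : [0,1] → [0,∞)` be measurable with `∫₀¹ f = 1` and `f > 0` a.e.;
let `F(θ) = ∫₀^θ f`, and let `G` be its generalized inverse (`G(v) = inf{θ ∈ [0,1] : F θ > v}`
for `v < 1`, `G(1) = 1`). Then for a.e. `v ∈ (0,1)`, `G` is differentiable at `v` with
`G'(v) = 1 / f(G(v))`, and `D_λ[G](v) → 1 / f(G(v))` as `λ → 0⁺`. -/
theorem statement8 (f : ℝ → ℝ) (hfm : Measurable f) (hf0 : ∀ x, 0 ≤ f x)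
    (hfi : IntegrableOn f (Set.Icc 0 1))
    (hf1 : ∫ x in Set.Icc (0:ℝ) 1, f x = 1)
    (hfpos : ∀ᵐ x ∂(volume.restrict (Set.Icc (0:ℝ) 1)), 0 < f x)
    (F G : ℝ → ℝ)
    (hF : ∀ θ, F θ = ∫ t in (0:ℝ)..θ, f t)
    (hG : ∀ v, G v = if v < 1 then sInf {θ | θ ∈ Set.Icc (0:ℝ) 1 ∧ v < F θ} else 1) :
    ∀ᵐ v ∂(volume.restrict (Set.Ioo (0:ℝ) 1)),
      HasDerivAt G (1 / f (G v)) v ∧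
      Tendsto (fun lam => smoothD G lam v) (nhdsWithin 0 (Set.Ioi 0))
        (nhds (ENNReal.ofReal (1 / f (G v)))) :=
  statement8_general f hfi hf1 hfpos F G hF hG
end

section
/- Let Θ, X, Y be real random variables on a probability space such that X = g(Θ) for some Borel measurable g : ℝ → ℝ, and such that Θ and Y are conditionally independent given X. Then the mutual informations agree: D_KL(Law(Θ,Y) ‖ Law(Θ) ⊗ Law(Y)) = D_KL(Law(X,Y) ‖ Law(X) ⊗ Law(Y)), where both sides are elements of [0,∞]. -/
open MeasureTheory ProbabilityTheory
open scoped ENNReal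

/- Kullback–Leibler divergence of probability measures, valued in `[0,∞]` (`ℝ≥0∞`):
`∫ log (dμ/dν) dμ` if `μ ≪ ν` (with value `+∞` if the log-likelihood ratio is not
integrable), and `+∞` otherwise.  Since for `μ ≪ ν` probability measures the negative part
of `llr μ ν` always has finite `μ`-integral, this matches the usual definition. -/
open Classical in
noncomputable def klDiv {α : Type*} [MeasurableSpace α] (μ ν : Measure α) : ℝ≥0∞ :=
  if μ.AbsolutelyContinuous ν then
    (if Integrable (llr μ ν) μ then ENNReal.ofReal (∫ x, llr μ ν x ∂μ) else ∞)
  else ∞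

/-! With `T (θ, y) = (g θ, y)`, the measures `Law(Θ,Y)` and `Law(Θ) ⊗ Law(Y)` push forward under `T`
to `Law(X,Y)` and `Law(X) ⊗ Law(Y)`. Conditional independence given `X` means that the conditional law
of `Y` given `Θ` depends on `Θ` only through `X = g Θ`; hence the density of `Law(Θ,Y)` with respect
to `Law(Θ) ⊗ Law(Y)` is the density of `Law(X,Y)` with respect to `Law(X) ⊗ Law(Y)` composed with
`T`. The two log-likelihood ratios then correspond under `T`, and so do the divergences. When
`Law(X,Y)` is not absolutely continuous, neither is `Law(Θ,Y)`, and both sides are `∞`. -/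

section KL

variable {α β : Type*} [MeasurableSpace α] [MeasurableSpace β] {μ ν : Measure α} {T : α → β}

lemma klDiv_eq_klDiv_map_of_eq_withDensity [SigmaFinite ν] (hT : Measurable T)
    (h : μ = ν.withDensity fun a ↦ (μ.map T).rnDeriv (ν.map T) (T a)) :
    klDiv μ ν = klDiv (μ.map T) (ν.map T) := by
  have hμν : μ ≪ ν := by rw [h]; exact withDensity_absolutelyContinuous _ _
  have hrn : μ.rnDeriv ν =ᵐ[ν] fun a ↦ (μ.map T).rnDeriv (ν.map T) (T a) := by
    have := Measure.rnDeriv_withDensity ν (f := fun a ↦ (μ.map T).rnDeriv (ν.map T) (T a))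
      ((Measure.measurable_rnDeriv _ _).comp hT)
    rwa [← h] at this
  have hllr : llr μ ν =ᵐ[μ] llr (μ.map T) (ν.map T) ∘ T := by
    filter_upwards [hμν.ae_le hrn] with a ha
    simp only [llr, Function.comp_apply, ha]
  have hsm : AEStronglyMeasurable (llr (μ.map T) (ν.map T)) (μ.map T) :=
    (measurable_llr _ _).aestronglyMeasurable
  rw [klDiv, klDiv, if_pos hμν, if_pos (hμν.map hT), integrable_congr hllr,
    integral_congr_ae hllr, integrable_map_measure hsm hT.aemeasurable,
    integral_map hT.aemeasurable hsm, Function.comp_def]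

lemma klDiv_eq_klDiv_map [SigmaFinite ν] (hT : Measurable T)
    (h : μ.map T ≪ ν.map T → μ = ν.withDensity fun a ↦ (μ.map T).rnDeriv (ν.map T) (T a)) :
    klDiv μ ν = klDiv (μ.map T) (ν.map T) := by
  by_cases hac : μ.map T ≪ ν.map T
  · exact klDiv_eq_klDiv_map_of_eq_withDensity hT (h hac)
  · have hμν : ¬ μ ≪ ν := fun hμν ↦ hac (hμν.map hT)
    simp only [klDiv, if_neg hac, if_neg hμν]

end KL

lemma setLIntegral_setLIntegral_rnDeriv_prod {β γ : Type*} [MeasurableSpace β]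
    [MeasurableSpace γ] {μ : Measure β} {ν : Measure γ} [SigmaFinite μ] [SigmaFinite ν]
    {ρ : Measure (β × γ)} [SigmaFinite ρ] (hρ : ρ ≪ μ.prod ν) {C : Set β} {B : Set γ}
    (hC : MeasurableSet C) (hB : MeasurableSet B) :
    ∫⁻ x in C, ∫⁻ y in B, ρ.rnDeriv (μ.prod ν) (x, y) ∂ν ∂μ = ρ (C ×ˢ B) := by
  conv_rhs => rw [← Measure.withDensity_rnDeriv_eq ρ (μ.prod ν) hρ]
  rw [withDensity_apply _ (hC.prod hB), ← Measure.prod_restrict,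
    lintegral_prod _ (Measure.measurable_rnDeriv _ _).aemeasurable]

section CondExp

variable {Ω : Type*} {m mΩ : MeasurableSpace Ω} {P : Measure Ω} [IsFiniteMeasure P]

lemma comp_ae_eq_ofReal_condExp_comap {γ : Type*} [mγ : MeasurableSpace γ] {X : Ω → γ}
    (hX : Measurable X) {s : Set Ω} (hs : MeasurableSet s) {H : γ → ℝ≥0∞} (hH : Measurable H)
    (hHs : ∀ C, MeasurableSet C → ∫⁻ x in C, H x ∂(P.map X) = P (X ⁻¹' C ∩ s)) :
    (fun ω ↦ H (X ω)) =ᵐ[P] fun ω ↦ ENNReal.ofReal ((P⟦s | (mγ.comap X)⟧) ω) := by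
  have hlint : ∫⁻ x, H x ∂(P.map X) ≠ ∞ := by
    rw [← setLIntegral_univ, hHs _ MeasurableSet.univ]
    exact measure_ne_top _ _
  have hfin : ∀ᵐ x ∂(P.map X), H x < ∞ := ae_lt_top hH hlint
  have hint : Integrable (fun ω ↦ (H (X ω)).toReal) P :=
    integrable_toReal_of_lintegral_ne_top (hH.comp hX).aemeasurable
      (by rwa [← lintegral_map hH hX])
  have hcond : (fun ω ↦ (H (X ω)).toReal) =ᵐ[P] P⟦s | (mγ.comap X)⟧ := by
    refine ae_eq_condExp_of_forall_setIntegral_eq hX.comap_le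
      ((integrable_const (1 : ℝ)).indicator hs) (fun _ _ _ ↦ hint.integrableOn) ?_
      (hH.ennreal_toReal.comp (comap_measurable X)).aestronglyMeasurable
    rintro _ ⟨C, hC, rfl⟩ -
    rw [setIntegral_indicator hs, setIntegral_const, smul_eq_mul, mul_one,
      ← setIntegral_map hC hH.ennreal_toReal.aestronglyMeasurable hX.aemeasurable,
      integral_toReal hH.aemeasurable.restrict (ae_restrict_of_ae hfin), hHs C hC,
      measureReal_def]
  filter_upwards [ae_of_ae_map hX.aemeasurable hfin, hcond] with ω hω hω'
  rw [← hω', ENNReal.ofReal_toReal hω.ne]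

variable [StandardBorelSpace Ω] {hm : m ≤ mΩ} {s t : Set Ω}

lemma ProbabilityTheory.CondIndepSet.measureReal_inter_eq_setIntegral_condExp
    (h : CondIndepSet m hm s t P) (hs : MeasurableSet s) (ht : MeasurableSet t) :
    P.real (s ∩ t) = ∫ ω in s, (P⟦t | m⟧) ω ∂P := by
  have hind : s.indicator (fun _ ↦ (1 : ℝ)) * P⟦t | m⟧ = s.indicator (P⟦t | m⟧) := by
    ext ω
    by_cases hω : ω ∈ s <;> simp [hω]
  have hint : Integrable (s.indicator (fun _ ↦ (1 : ℝ)) * P⟦t | m⟧) P :=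
    hind ▸ integrable_condExp.indicator hs
  calc P.real (s ∩ t) = ∫ ω, (P⟦s ∩ t | m⟧) ω ∂P := by
        rw [integral_condExp hm]
        exact (integral_indicator_one (hs.inter ht)).symm
    _ = ∫ ω, (P⟦s | m⟧ * P⟦t | m⟧) ω ∂P :=
        integral_congr_ae ((condIndepSet_iff _ _ s t hs ht P).mp h)
    _ = ∫ ω, P[s.indicator (fun _ ↦ (1 : ℝ)) * P⟦t | m⟧ | m] ω ∂P :=
        integral_congr_ae (condExp_mul_of_stronglyMeasurable_right stronglyMeasurable_condExp
          hint ((integrable_const 1).indicator hs)).symm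
    _ = ∫ ω in s, (P⟦t | m⟧) ω ∂P := by rw [integral_condExp hm, hind, integral_indicator hs]

lemma ProbabilityTheory.CondIndepSet.measure_inter_eq_setLIntegral_condExp
    (h : CondIndepSet m hm s t P) (hs : MeasurableSet s) (ht : MeasurableSet t) :
    P (s ∩ t) = ∫⁻ ω in s, ENNReal.ofReal ((P⟦t | m⟧) ω) ∂P := by
  rw [← ofReal_measureReal, h.measureReal_inter_eq_setIntegral_condExp hs ht,
    ofReal_integral_eq_lintegral_ofReal integrable_condExp.integrableOn
      (ae_restrict_of_ae (condExp_nonneg (ae_of_all _ fun ω ↦ ?_)))]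
  by_cases hω : ω ∈ t <;> simp [hω]

end CondExp

lemma map_prod_eq_withDensity_rnDeriv_of_condIndepFun {Ω β γ δ : Type*} {mΩ : MeasurableSpace Ω}
    [StandardBorelSpace Ω] [MeasurableSpace β] [mγ : MeasurableSpace γ] [MeasurableSpace δ]
    {P : Measure Ω} [IsFiniteMeasure P] {Θ : Ω → β} {X : Ω → γ} {Y : Ω → δ} {g : β → γ}
    (hΘ : Measurable Θ) (hX : Measurable X) (hY : Measurable Y) (hg : Measurable g)
    (hXg : X = fun ω ↦ g (Θ ω)) (hci : CondIndepFun (mγ.comap X) hX.comap_le Θ Y P)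
    (hac : P.map (fun ω ↦ (X ω, Y ω)) ≪ (P.map X).prod (P.map Y)) :
    P.map (fun ω ↦ (Θ ω, Y ω)) = ((P.map Θ).prod (P.map Y)).withDensity fun p ↦
      (P.map (fun ω ↦ (X ω, Y ω))).rnDeriv ((P.map X).prod (P.map Y)) (g p.1, p.2) := by
  refine Measure.ext_prod fun {A B} hA hB ↦ ?_
  set f := (P.map (fun ω ↦ (X ω, Y ω))).rnDeriv ((P.map X).prod (P.map Y))
  -- `H x` is a version of `P(Y ∈ B | X = x)`
  set H : γ → ℝ≥0∞ := fun x ↦ ∫⁻ y in B, f (x, y) ∂(P.map Y)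
  have hf : Measurable f := Measure.measurable_rnDeriv _ _
  have hH : Measurable H := hf.lintegral_prod_right'
  have hHX : (fun ω ↦ H (X ω)) =ᵐ[P] fun ω ↦ ENNReal.ofReal ((P⟦Y ⁻¹' B | (mγ.comap X)⟧) ω) :=
    comp_ae_eq_ofReal_condExp_comap hX (hY hB) hH fun C hC ↦ by
      rw [setLIntegral_setLIntegral_rnDeriv_prod hac hC hB,
        Measure.map_apply (hX.prodMk hY) (hC.prod hB), Set.mk_preimage_prod]
  calc P.map (fun ω ↦ (Θ ω, Y ω)) (A ×ˢ B) = P (Θ ⁻¹' A ∩ Y ⁻¹' B) := by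
        rw [Measure.map_apply (hΘ.prodMk hY) (hA.prod hB), Set.mk_preimage_prod]
    _ = ∫⁻ ω in Θ ⁻¹' A, H (X ω) ∂P := by
        rw [((condIndepFun_iff_condIndepSet_preimage hΘ hY).mp hci A B hA hB
          ).measure_inter_eq_setLIntegral_condExp (hΘ hA) (hY hB)]
        exact (lintegral_congr_ae (ae_restrict_of_ae hHX)).symm
    _ = ∫⁻ θ in A, H (g θ) ∂(P.map Θ) := by
        rw [hXg]
        exact (setLIntegral_map hA (hH.comp hg) hΘ).symm
    _ = _ := by
        rw [withDensity_apply _ (hA.prod hB), ← Measure.prod_restrict,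
          lintegral_prod (fun p : β × δ ↦ f (g p.1, p.2))
            (hf.comp (hg.prodMap measurable_id)).aemeasurable]

theorem statement11_general {Ω : Type*} [MeasurableSpace Ω] [StandardBorelSpace Ω]
    (P : Measure Ω) [IsProbabilityMeasure P]
    (Θ X Y : Ω → ℝ) (hΘ : Measurable Θ) (hX : Measurable X) (hY : Measurable Y)
    (g : ℝ → ℝ) (hg : Measurable g) (hXg : X = fun ω => g (Θ ω))
    (hci : CondIndepFun (MeasurableSpace.comap X inferInstance) hX.comap_le Θ Y P) :
    klDiv (P.map (fun ω => (Θ ω, Y ω))) ((P.map Θ).prod (P.map Y))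
      = klDiv (P.map (fun ω => (X ω, Y ω))) ((P.map X).prod (P.map Y)) := by
  have hT : Measurable (Prod.map g (id : ℝ → ℝ)) := hg.prodMap measurable_id
  have hjoint : (P.map fun ω ↦ (Θ ω, Y ω)).map (Prod.map g id) = P.map fun ω ↦ (X ω, Y ω) := by
    rw [Measure.map_map hT (hΘ.prodMk hY), hXg]
    rfl
  have hprod : ((P.map Θ).prod (P.map Y)).map (Prod.map g id) = (P.map X).prod (P.map Y) := by
    rw [← Measure.map_prod_map (P.map Θ) (P.map Y) hg measurable_id, Measure.map_id,
      Measure.map_map hg hΘ, hXg]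
    rfl
  calc klDiv (P.map fun ω ↦ (Θ ω, Y ω)) ((P.map Θ).prod (P.map Y))
      = klDiv ((P.map fun ω ↦ (Θ ω, Y ω)).map (Prod.map g id))
          (((P.map Θ).prod (P.map Y)).map (Prod.map g id)) :=
        klDiv_eq_klDiv_map hT fun hac ↦ by
          rw [hjoint, hprod] at hac ⊢
          exact map_prod_eq_withDensity_rnDeriv_of_condIndepFun hΘ hX hY hg hXg hci hac
    _ = klDiv (P.map fun ω ↦ (X ω, Y ω)) ((P.map X).prod (P.map Y)) := by rw [hjoint, hprod]

/-- mutual information is preserved: if `X = g(Θ)` for a Borel function `g`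
and `Θ ⫫ Y | X` (conditional independence given the σ-algebra generated by `X`), then
`D_KL(Law(Θ,Y) ‖ Law(Θ) ⊗ Law(Y)) = D_KL(Law(X,Y) ‖ Law(X) ⊗ Law(Y))`, i.e.
`I(Θ;Y) = I(X;Y)`.  (Both sides are elements of `[0,∞]`; KL divergences of probability
measures are nonnegative, so `ℝ≥0∞` values are used.) -/
theorem statement11 {Ω : Type*} [MeasurableSpace Ω] [StandardBorelSpace Ω] [Nonempty Ω]
    (P : Measure Ω) [IsProbabilityMeasure P]
    (Θ X Y : Ω → ℝ) (hΘ : Measurable Θ) (hX : Measurable X) (hY : Measurable Y)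
    (g : ℝ → ℝ) (hg : Measurable g) (hXg : X = fun ω => g (Θ ω))
    (hci : CondIndepFun (MeasurableSpace.comap X inferInstance) hX.comap_le Θ Y P) :
    klDiv (P.map (fun ω => (Θ ω, Y ω))) ((P.map Θ).prod (P.map Y))
      = klDiv (P.map (fun ω => (X ω, Y ω))) ((P.map X).prod (P.map Y)) :=
  statement11_general P Θ X Y hΘ hX hY g hg hXg hci
end

section
/- Let (Ω, 𝓕, P) be a probability space with a filtration (𝓕_n)_{n≥0}, and let (S_n)_{n≥0} be an adapted real-valued process with S_n > 0 almost surely for every n. Let (a_k)_{k∈ℤ} be a strictly increasing two-sided real sequence with a_k → 0 as k → −∞ and a_k → ∞ as k → ∞, and let (δ_k)_{k∈ℤ} be numbers with δ_k > 0. Assume that for every n ≥ 0 and every k ∈ ℤ, almost surely on the event {a_k < S_n ≤ a_{k+1}} one has P(S_{n+1} > a_{k+1} | 𝓕_n) ≥ δ_k. Then for every k ∈ ℤ, P(limsup_{n→∞} S_n ∈ (a_k, a_{k+1}]) = 0; consequently P(0 < limsup_{n→∞} S_n < ∞) = 0. -/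
open MeasureTheory ProbabilityTheory Filter Set

/-!
Fix a band `(a k, a (k+1)]`. Along a path visiting it infinitely often, the conditional
probabilities of jumping above `a (k+1)` are infinitely often at least `δ k`, so their sum diverges,
and Lévy's conditional Borel–Cantelli lemma makes the path exceed `a (k+1)` infinitely often.
If the limsup lay in the band, the path would eventually stay below `a (k+2)` while exceeding
`a k` infinitely often, so it would visit one of the two bands `(a k, a (k+1)]`,
`(a (k+1), a (k+2)]` infinitely often and hence, by the above applied twice, exceed `a (k+2)`
infinitely often: a contradiction. Finally the bands cover `(0, ∞)`.
-/

theorem tendsto_sum_range_atTop_of_frequently_le {f : ℕ → ℝ} (hf : ∀ n, 0 ≤ f n) {δ : ℝ}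
    (hδ : 0 < δ) (h : ∃ᶠ n in atTop, δ ≤ f n) :
    Tendsto (fun n => ∑ i ∈ Finset.range n, f i) atTop atTop := by
  refine (not_summable_iff_tendsto_nat_atTop_of_nonneg hf).1 fun hsum => ?_
  exact h ((hsum.tendsto_atTop_zero.eventually (gt_mem_nhds hδ)).mono fun n hn => hn.not_ge)

theorem ae_frequently_of_frequently_le_condExp_indicator {Ω : Type*} {m0 : MeasurableSpace Ω}
    {μ : Measure Ω} [IsFiniteMeasure μ] {ℱ : Filtration ℕ m0} {s B : ℕ → Set Ω}
    (hs : ∀ n, MeasurableSet[ℱ n] (s n)) {δ : ℝ} (hδ : 0 < δ)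
    (h : ∀ n, ∀ᵐ ω ∂μ, ω ∈ B n → δ ≤ μ[(s (n + 1)).indicator (1 : Ω → ℝ) | ℱ n] ω) :
    ∀ᵐ ω ∂μ, (∃ᶠ n in atTop, ω ∈ B n) → ∃ᶠ n in atTop, ω ∈ s n := by
  have hnonneg : ∀ᵐ ω ∂μ, ∀ n, 0 ≤ μ[(s (n + 1)).indicator (1 : Ω → ℝ) | ℱ n] ω :=
    ae_all_iff.2 fun n => condExp_nonneg (Eventually.of_forall fun _ =>
      indicator_nonneg (fun _ _ => zero_le_one) _)
  filter_upwards [ae_mem_limsup_atTop_iff μ hs, hnonneg, ae_all_iff.2 h] with ω hlimsup hnonneg hω hB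
  rw [← mem_limsup_iff_frequently_mem, hlimsup]
  exact tendsto_sum_range_atTop_of_frequently_le hnonneg hδ (hB.mono hω)

theorem limsup_notMem_Ioc_of_frequently_escape {α : Type*} [CompleteLinearOrder α] {x : ℕ → α}
    {u v w : α} (hvw : v < w)
    (hescape_uv : (∃ᶠ n in atTop, x n ∈ Ioc u v) → ∃ᶠ n in atTop, v < x n)
    (hescape_vw : (∃ᶠ n in atTop, x n ∈ Ioc v w) → ∃ᶠ n in atTop, w < x n) :
    limsup x atTop ∉ Ioc u v := by
  rintro ⟨hu, hv⟩
  have hbelow : ∀ᶠ n in atTop, x n < w := eventually_lt_of_limsup_lt (hv.trans_lt hvw)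
  have habove : ∃ᶠ n in atTop, u < x n := frequently_lt_of_lt_limsup (by isBoundedDefault) hu
  have hbands : ∃ᶠ n in atTop, x n ∈ Ioc u v ∨ x n ∈ Ioc v w :=
    (habove.and_eventually hbelow).mono fun n ⟨hun, hnw⟩ =>
      (le_or_gt (x n) v).imp (fun hnv => ⟨hun, hnv⟩) fun hvn => ⟨hvn, hnw.le⟩
  have hupper : ∃ᶠ n in atTop, x n ∈ Ioc v w := by
    rcases frequently_or_distrib.1 hbands with hlower | hupper
    · exact ((hescape_uv hlower).and_eventually hbelow).mono fun n h => ⟨h.1, h.2.le⟩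
    · exact hupper
  obtain ⟨n, hwn, hnw⟩ := ((hescape_vw hupper).and_eventually hbelow).exists
  exact lt_asymm hwn hnw

theorem Monotone.exists_mem_Ioc_add_one {β : Type*} [LinearOrder β] {a : ℤ → β}
    (ha : Monotone a) {x : β} (hlow : ∃ k, a k < x) (hup : ∃ k, x ≤ a k) :
    ∃ k, x ∈ Ioc (a k) (a (k + 1)) := by
  obtain ⟨k₁, hk₁⟩ := hup
  obtain ⟨k, hk, hmax⟩ := Int.exists_greatest_of_bdd (P := fun k => a k < x)
    ⟨k₁, fun j hj => le_of_not_gt fun hlt => (hk₁.trans (ha hlt.le)).not_gt hj⟩ hlow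
  exact ⟨k, hk, le_of_not_gt fun h => (hmax _ h).not_gt (lt_add_one k)⟩

theorem exists_mem_Ioc_coe_of_pos_of_lt_top {a : ℤ → ℝ} (ha : Monotone a)
    (ha0 : Tendsto a atBot (nhds 0)) (hatop : Tendsto a atTop atTop) {L : EReal} (h0 : 0 < L)
    (htop : L < ⊤) : ∃ k, L ∈ Ioc ((a k : ℝ) : EReal) ((a (k + 1) : ℝ) : EReal) := by
  lift L to ℝ using ⟨htop.ne, (EReal.bot_lt_zero.trans h0).ne'⟩
  have h0 : 0 < L := by exact_mod_cast h0
  obtain ⟨k, hk⟩ := ha.exists_mem_Ioc_add_one (ha0.eventually (eventually_lt_nhds h0)).exists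
    (hatop.eventually_ge_atTop L).exists
  exact ⟨k, by exact_mod_cast hk.1, by exact_mod_cast hk.2⟩

theorem statement12_general {Ω : Type*} {m0 : MeasurableSpace Ω} (P : Measure Ω)
    [IsProbabilityMeasure P]
    (𝓕 : Filtration ℕ m0) (S : ℕ → Ω → ℝ) (hadapt : Adapted 𝓕 S)
    (a : ℤ → ℝ) (hamono : StrictMono a)
    (ha0 : Tendsto a atBot (nhds 0)) (hatop : Tendsto a atTop atTop)
    (δ : ℤ → ℝ) (hδ : ∀ k, 0 < δ k)
    (hstep : ∀ n k, ∀ᵐ ω ∂P, a k < S n ω → S n ω ≤ a (k + 1) →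
      δ k ≤ (P[Set.indicator {ω' | a (k + 1) < S (n + 1) ω'} (fun _ => (1:ℝ)) | 𝓕 n]) ω) :
    (∀ k : ℤ, P {ω | Filter.limsup (fun n => ((S n ω : ℝ) : EReal)) atTop
        ∈ Set.Ioc ((a k : ℝ) : EReal) ((a (k + 1) : ℝ) : EReal)} = 0) ∧
    P {ω | 0 < Filter.limsup (fun n => ((S n ω : ℝ) : EReal)) atTop ∧
        Filter.limsup (fun n => ((S n ω : ℝ) : EReal)) atTop < ⊤} = 0 := by
  have hescape : ∀ k, ∀ᵐ ω ∂P,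
      (∃ᶠ n in atTop, ((S n ω : ℝ) : EReal) ∈ Ioc ((a k : ℝ) : EReal) ((a (k + 1) : ℝ) : EReal)) →
      ∃ᶠ n in atTop, ((a (k + 1) : ℝ) : EReal) < ((S n ω : ℝ) : EReal) := by
    intro k
    filter_upwards [ae_frequently_of_frequently_le_condExp_indicator
      (B := fun n => {ω | S n ω ∈ Ioc (a k) (a (k + 1))})
      (fun n => measurableSet_lt measurable_const (hadapt n)) (hδ k)
      fun n => (hstep n k).mono fun ω h hB => h hB.1 hB.2] with ω h
    simpa only [mem_Ioc, EReal.coe_lt_coe_iff, EReal.coe_le_coe_iff, mem_ofPred_eq] using h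
  have hband : ∀ k : ℤ, P {ω | Filter.limsup (fun n => ((S n ω : ℝ) : EReal)) atTop
      ∈ Set.Ioc ((a k : ℝ) : EReal) ((a (k + 1) : ℝ) : EReal)} = 0 := fun k =>
    measure_eq_zero_iff_ae_notMem.2 <| by
      filter_upwards [hescape k, hescape (k + 1)] with ω h h'
      exact limsup_notMem_Ioc_of_frequently_escape
        (EReal.coe_lt_coe_iff.2 (hamono (lt_add_one _))) h h'
  refine ⟨hband, measure_mono_null (fun ω ⟨h0, htop⟩ => ?_) (measure_iUnion_null hband)⟩
  exact mem_iUnion.2 (exists_mem_Ioc_coe_of_pos_of_lt_top hamono.monotone ha0 hatop h0 htop)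

/-- let `(S_n)` be adapted, a.s. positive, and let `(a_k)_{k∈ℤ}` be a strictly
increasing two-sided sequence with `a_k → 0` (`k → -∞`) and `a_k → ∞` (`k → ∞`).  If from any
state in the band `(a_k, a_{k+1}]` the conditional probability (given `𝓕_n`) of exceeding
`a_{k+1}` at the next step is at least `δ_k > 0`, then for every `k`,
`P(limsup_n S_n ∈ (a_k, a_{k+1}]) = 0`; consequently `P(0 < limsup_n S_n < ∞) = 0`
(the limsup being taken in the extended reals). -/
theorem statement12 {Ω : Type*} {m0 : MeasurableSpace Ω} (P : Measure Ω)
    [IsProbabilityMeasure P]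
    (𝓕 : Filtration ℕ m0) (S : ℕ → Ω → ℝ) (hadapt : Adapted 𝓕 S)
    (hpos : ∀ n, ∀ᵐ ω ∂P, 0 < S n ω)
    (a : ℤ → ℝ) (hamono : StrictMono a)
    (ha0 : Tendsto a atBot (nhds 0)) (hatop : Tendsto a atTop atTop)
    (δ : ℤ → ℝ) (hδ : ∀ k, 0 < δ k)
    (hstep : ∀ n k, ∀ᵐ ω ∂P, a k < S n ω → S n ω ≤ a (k + 1) →
      δ k ≤ (P[Set.indicator {ω' | a (k + 1) < S (n + 1) ω'} (fun _ => (1:ℝ)) | 𝓕 n]) ω) :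
    (∀ k : ℤ, P {ω | Filter.limsup (fun n => ((S n ω : ℝ) : EReal)) atTop
        ∈ Set.Ioc ((a k : ℝ) : EReal) ((a (k + 1) : ℝ) : EReal)} = 0) ∧
    P {ω | 0 < Filter.limsup (fun n => ((S n ω : ℝ) : EReal)) atTop ∧
        Filter.limsup (fun n => ((S n ω : ℝ) : EReal)) atTop < ⊤} = 0 :=
  statement12_general P 𝓕 S hadapt a hamono ha0 hatop δ hδ hstep
end

section
/- Let (Ω, 𝓕, P) be a probability space with a filtration (𝓕_n)_{n≥0}, and let (T_n)_{n≥0} be an adapted process with 0 ≤ T_n ≤ 1 almost surely. Suppose there exists t₀ ∈ (0,1) such that for every n, almost surely on the event {T_n ≥ t₀} one has E[T_{n+1} | 𝓕_n] ≥ T_n. Suppose moreover that limsup_{n→∞} T_n = 1 almost surely. Then T_n → 1 almost surely. -/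
/-!
Above the level `t₀` the process is a submartingale, so `max (T n) t₀` is a bounded
submartingale and converges almost surely. Its limit is `max (limsup T) t₀ = 1 > t₀`, so
eventually `T n > t₀`, where `T n` coincides with `max (T n) t₀`.
-/

open MeasureTheory ProbabilityTheory Filter Topology

section Deterministic

variable {α ι : Type*} [ConditionallyCompleteLinearOrder α] [TopologicalSpace α] [OrderTopology α]
  {F : Filter ι} [F.NeBot]

theorem Filter.Tendsto.of_tendsto_max_of_limsup_eq {u : ι → α} {a t c : α} (ht : t < a)
    (hbdd : IsBoundedUnder (· ≤ ·) F u) (hcobdd : IsCoboundedUnder (· ≤ ·) F u)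
    (hlimsup : limsup u F = a) (hmax : Tendsto (fun i => max (u i) t) F (𝓝 c)) :
    Tendsto u F (𝓝 a) := by
  have hca : c = a := calc
    c = limsup (fun i => max (u i) t) F := hmax.limsup_eq.symm
    _ = max (limsup u F) t := (Monotone.map_limsup_of_continuousAt (f := fun x => max x t)
      (fun _ _ h => max_le_max_right t h) u (continuous_id.max continuous_const).continuousAt
      hbdd hcobdd).symm
    _ = a := by rw [hlimsup, max_eq_left ht.le]
  subst hca
  refine hmax.congr' ?_
  filter_upwards [hmax.eventually (lt_mem_nhds ht)] with i hi
  exact max_eq_left (lt_max_iff.1 hi |>.resolve_right (lt_irrefl t)).le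

end Deterministic

section Martingale

variable {Ω : Type*} {m0 : MeasurableSpace Ω} {μ : Measure Ω} [IsFiniteMeasure μ]
  {𝓕 : Filtration ℕ m0}

theorem submartingale_max_const_of_le_condExp {f : ℕ → Ω → ℝ} (hadapt : Adapted 𝓕 f)
    (hf_int : ∀ n, Integrable (f n) μ) (c : ℝ)
    (hsub : ∀ n, ∀ᵐ ω ∂μ, c ≤ f n ω → f n ω ≤ μ[f (n + 1) | 𝓕 n] ω) :
    Submartingale (fun n ω => max (f n ω) c) 𝓕 μ := by
  have hmax_int : ∀ n, Integrable (fun ω => max (f n ω) c) μ :=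
    fun n => (hf_int n).sup (integrable_const c)
  refine submartingale_nat (fun n => ((hadapt n).max measurable_const).stronglyMeasurable)
    hmax_int fun n => ?_
  have h_self : μ[f (n + 1) | 𝓕 n] ≤ᵐ[μ] μ[fun ω => max (f (n + 1) ω) c | 𝓕 n] :=
    condExp_mono (hf_int _) (hmax_int _) (ae_of_all _ fun _ => le_max_left _ _)
  have h_const : (fun _ => c) ≤ᵐ[μ] μ[fun ω => max (f (n + 1) ω) c | 𝓕 n] := by
    simpa only [condExp_const (𝓕.le n)] using condExp_mono (m := 𝓕 n) (integrable_const c)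
      (hmax_int _) (ae_of_all _ fun _ => le_max_right _ _)
  filter_upwards [hsub n, h_self, h_const] with ω hω h_self h_const
  rcases le_total c (f n ω) with h | h
  · exact max_le ((hω h).trans h_self) h_const
  · exact max_le (h.trans h_const) h_const

theorem Submartingale.exists_ae_tendsto_of_norm_le {f : ℕ → Ω → ℝ} (hf : Submartingale f 𝓕 μ)
    {C : ℝ} (hbdd : ∀ n, ∀ᵐ ω ∂μ, ‖f n ω‖ ≤ C) :
    ∀ᵐ ω ∂μ, ∃ c, Tendsto (fun n => f n ω) atTop (𝓝 c) :=
  hf.exists_ae_tendsto_of_bdd (R := (μ Set.univ).toNNReal * C.toNNReal) fun n =>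
    (eLpNorm_le_of_ae_bound (hbdd n)).trans_eq (by simp [ENNReal.ofReal])

end Martingale

/-- Lamperti-type criterion: let `(T_n)` be adapted with `0 ≤ T_n ≤ 1` a.s.
If there is `t₀ ∈ (0,1)` such that for every `n`, a.s. on `{T_n ≥ t₀}` one has
`E[T_{n+1} | 𝓕_n] ≥ T_n`, and if `limsup_n T_n = 1` a.s., then `T_n → 1` a.s. -/
theorem statement13 {Ω : Type*} {m0 : MeasurableSpace Ω} (P : Measure Ω)
    [IsProbabilityMeasure P]
    (𝓕 : Filtration ℕ m0) (T : ℕ → Ω → ℝ) (hadapt : Adapted 𝓕 T)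
    (hbdd : ∀ n, ∀ᵐ ω ∂P, T n ω ∈ Set.Icc (0:ℝ) 1)
    (t₀ : ℝ) (ht₀ : t₀ ∈ Set.Ioo (0:ℝ) 1)
    (hsub : ∀ n, ∀ᵐ ω ∂P, t₀ ≤ T n ω → T n ω ≤ (P[T (n + 1) | 𝓕 n]) ω)
    (hlimsup : ∀ᵐ ω ∂P, Filter.limsup (fun n => T n ω) atTop = 1) :
    ∀ᵐ ω ∂P, Tendsto (fun n => T n ω) atTop (nhds 1) := by
  have hT_int : ∀ n, Integrable (T n) P := fun n =>
    .of_bound ((hadapt n).mono (𝓕.le n) le_rfl).aestronglyMeasurable 1 <| by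
      filter_upwards [hbdd n] with ω hω
      exact abs_le.2 ⟨by linarith [hω.1], hω.2⟩
  have hmax_bdd : ∀ n, ∀ᵐ ω ∂P, ‖max (T n ω) t₀‖ ≤ 1 := fun n => by
    filter_upwards [hbdd n] with ω hω
    exact abs_le.2 ⟨by linarith [hω.1, le_max_left (T n ω) t₀], max_le hω.2 ht₀.2.le⟩
  have hconv := Submartingale.exists_ae_tendsto_of_norm_le
    (submartingale_max_const_of_le_condExp hadapt hT_int t₀ hsub) hmax_bdd
  filter_upwards [ae_all_iff.2 hbdd, hlimsup, hconv] with ω hω hls ⟨c, hc⟩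
  exact hc.of_tendsto_max_of_limsup_eq ht₀.2
    (isBoundedUnder_of_eventually_le (.of_forall fun n => (hω n).2))
    (isCoboundedUnder_le_of_le atTop fun n => (hω n).1) hls
end

section
/- Let (U_k)_{k≥1} be an i.i.d. sequence of integrable real random variables with mean μ := E U₁, let (W_k)_{k≥1} be an i.i.d. sequence of real random variables with E|W₁| < ∞, and let (N_n)_{n≥1} be integer-valued random variables with 0 ≤ N_n ≤ n. Assume the sequence (U_k), the sequence (W_k), and the process (N_n) are mutually independent, and that there is a function δ : ℕ → [0,1] with δ(m) → 0 as m → ∞ such that P(N_n > m) ≤ δ(m) for all n and m. Define S'_n := Σ_{k=1}^{n−N_n} U_k + Σ_{k=1}^{N_n} W_k. Then for every ε > 0, lim_{n→∞} P(S'_n < n(μ − ε)) = 0. -/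
/-!
On the event `N_n ≤ m` the `W`-part of `S'_n` is at least `-∑_{k<m} |W_k|`, a random variable
not depending on `n`, while by the strong law each of the finitely many sums `∑_{k<n-j} U_k`,
`j ≤ m`, is `nμ + o(n)` almost surely, so it eventually exceeds `n(μ - ε)` by more than that
variable. Hence the probability in question is at most `δ(m) + o(1)` for every `m`, and
`δ(m) → 0`.
-/

open MeasureTheory ProbabilityTheory Filter Topology Finset

theorem tendsto_shifted_div_of_tendsto_div {s : ℕ → ℝ} {μ : ℝ}
    (hs : Tendsto (fun n : ℕ => s n / n) atTop (𝓝 μ)) (j : ℕ) :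
    Tendsto (fun n : ℕ => s (n - j) / n) atTop (𝓝 μ) := by
  have hshift : Tendsto (fun n : ℕ => s (n - j) / (n - j : ℕ)) atTop (𝓝 μ) :=
    hs.comp (tendsto_sub_atTop_nat j)
  have hratio : Tendsto (fun n : ℕ => ((n - j : ℕ) : ℝ) / n) atTop (𝓝 1) := by
    refine ((tendsto_natCast_div_add_atTop (j : ℝ)).comp (tendsto_sub_atTop_nat j)).congr' ?_
    filter_upwards [eventually_ge_atTop j] with n hn
    simp [Nat.cast_sub hn]
  refine (mul_one μ ▸ hshift.mul hratio).congr' ?_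
  filter_upwards [eventually_gt_atTop j] with n hn
  exact div_mul_div_cancel₀ (by exact_mod_cast (Nat.sub_pos_of_lt hn).ne')

theorem eventually_mul_lt_shifted_sub_of_tendsto_div {s : ℕ → ℝ} {μ ε : ℝ}
    (hs : Tendsto (fun n : ℕ => s n / n) atTop (𝓝 μ)) (hε : 0 < ε) (m : ℕ) (c : ℝ) :
    ∀ᶠ n : ℕ in atTop, ∀ j ≤ m, n * (μ - ε) < s (n - j) - c := by
  have hshifted : ∀ j, ∀ᶠ n : ℕ in atTop, n * (μ - ε) < s (n - j) - c := by
    intro j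
    have hlim : Tendsto (fun n : ℕ => s (n - j) / n - c / n) atTop (𝓝 μ) := by
      simpa using (tendsto_shifted_div_of_tendsto_div hs j).sub
        (tendsto_const_div_atTop_nhds_zero_nat c)
    filter_upwards [hlim.eventually (lt_mem_nhds (sub_lt_self μ hε)), eventually_gt_atTop 0]
      with n hn hpos
    rwa [← sub_div, lt_div_iff₀ (by exact_mod_cast hpos), mul_comm] at hn
  simpa [← Set.mem_Iic] using ((Set.finite_Iic m).eventually_all).2 fun j _ => hshifted j

theorem tendsto_measure_of_ae_eventually_notMem {Ω ι : Type*} [MeasurableSpace Ω]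
    {P : Measure Ω} [IsFiniteMeasure P] {L : Filter ι} [L.IsCountablyGenerated] {A : ι → Set Ω}
    (hA : ∀ i, MeasurableSet (A i)) (h : ∀ᵐ ω ∂P, ∀ᶠ i in L, ω ∉ A i) :
    Tendsto (fun i => P (A i)) L (𝓝 0) := by
  simpa using tendsto_measure_of_ae_tendsto_indicator_of_isFiniteMeasure L
    MeasurableSet.empty hA (by simpa using h)

theorem tendsto_measure_exists_partialSum_sub_lt {Ω : Type*} [MeasurableSpace Ω]
    {P : Measure Ω} [IsFiniteMeasure P] {U : ℕ → Ω → ℝ} (hUm : ∀ k, Measurable (U k))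
    (hUindep : Pairwise fun i j => IndepFun (U i) (U j) P)
    (hUident : ∀ k, IdentDistrib (U k) (U 0) P P) (hUint : Integrable (U 0) P)
    {c : Ω → ℝ} (hc : Measurable c) {ε : ℝ} (hε : 0 < ε) (m : ℕ) :
    Tendsto (fun n : ℕ => P {ω | ∃ j ≤ m,
        ∑ k ∈ range (n - j), U k ω - c ω < n * ((∫ x, U 0 x ∂P) - ε)}) atTop (𝓝 0) := by
  refine tendsto_measure_of_ae_eventually_notMem (fun n => ?_) ?_
  · have hsum (j : ℕ) : Measurable fun ω => ∑ k ∈ range (n - j), U k ω - c ω :=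
      (Finset.measurable_sum _ fun k _ => hUm k).sub hc
    exact measurableSet_setOfPred.2 (Measurable.exists fun j => measurable_const.and
      (measurableSet_setOfPred.1 (measurableSet_lt (hsum j) measurable_const)))
  · filter_upwards [strong_law_ae_real U hUint hUindep hUident] with ω hω
    filter_upwards [eventually_mul_lt_shifted_sub_of_tendsto_div hω hε m (c ω)] with n hn
    rintro ⟨j, hj, hlt⟩
    exact (hn j hj).not_gt hlt

theorem neg_sum_abs_le_sum_range {w : ℕ → ℝ} {N m : ℕ} (h : N ≤ m) :
    -∑ k ∈ range m, |w k| ≤ ∑ k ∈ range N, w k := by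
  calc -∑ k ∈ range m, |w k| ≤ -∑ k ∈ range N, |w k| :=
        neg_le_neg (sum_le_sum_of_subset_of_nonneg (range_subset_range.2 h) fun k _ _ => abs_nonneg _)
    _ ≤ ∑ k ∈ range N, w k := by
        rw [← sum_neg_distrib]; exact sum_le_sum fun k _ => neg_abs_le _

theorem tendsto_zero_of_le_add {ι κ : Type*} {l : Filter ι} [l.NeBot] {L : Filter κ}
    {a : κ → ℝ} {δ : ι → ℝ} {b : ι → κ → ℝ} (ha : 0 ≤ a) (hδ : Tendsto δ l (𝓝 0))
    (hb : ∀ m, Tendsto (b m) L (𝓝 0)) (hab : ∀ m n, a n ≤ δ m + b m n) :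
    Tendsto a L (𝓝 0) := by
  refine tendsto_order.2 ⟨fun e he => Eventually.of_forall fun n => he.trans_le (ha n),
    fun e he => ?_⟩
  obtain ⟨m, hm⟩ := (hδ.eventually (gt_mem_nhds (half_pos he))).exists
  filter_upwards [(hb m).eventually (gt_mem_nhds (half_pos he))] with n hn
  linarith [hab m n]

theorem statement15_general {Ω : Type*} [MeasurableSpace Ω] (P : Measure Ω) [IsProbabilityMeasure P]
    (U W : ℕ → Ω → ℝ) (N : ℕ → Ω → ℕ)
    (hUm : ∀ k, Measurable (U k)) (hWm : ∀ k, Measurable (W k))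
    (hUiid : iIndepFun U P)
    (hUdist : ∀ k, P.map (U k) = P.map (U 0))
    (hUint : Integrable (U 0) P)
    (δ : ℕ → ℝ)
    (hδlim : Tendsto δ atTop (nhds 0))
    (hN : ∀ n m : ℕ, (P {ω | m < N n ω}).toReal ≤ δ m) :
    ∀ ε : ℝ, 0 < ε →
      Tendsto (fun n : ℕ =>
          (P {ω | (∑ k ∈ Finset.range (n - N n ω), U k ω)
              + (∑ k ∈ Finset.range (N n ω), W k ω)
            < (n : ℝ) * ((∫ x, U 0 x ∂P) - ε)}).toReal)
        atTop (nhds 0) := by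
  intro ε hε
  have hsmall (m : ℕ) := tendsto_measure_exists_partialSum_sub_lt hUm
    (fun i j hij => hUiid.indepFun hij)
    (fun k => ⟨(hUm k).aemeasurable, (hUm 0).aemeasurable, hUdist k⟩) hUint
    (Finset.measurable_sum (range m) fun k _ => (hWm k).abs) hε m
  refine tendsto_zero_of_le_add (fun n => ENNReal.toReal_nonneg) hδlim
    (fun m => by simpa using (ENNReal.tendsto_toReal ENNReal.zero_ne_top).comp (hsmall m))
    fun m n => ?_
  refine (measureReal_mono fun ω hω => ?_).trans
    ((measureReal_union_le _ _).trans (add_le_add_left (hN n m) _))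
  rcases lt_or_ge m (N n ω) with hNm | hNm
  · exact Or.inl hNm
  · refine Or.inr ⟨N n ω, hNm, ?_⟩
    linarith [hω.out, neg_sum_abs_le_sum_range (w := fun k => W k ω) hNm]

/-- let `(U_k)` be i.i.d. integrable with mean `μ = E U₀`, `(W_k)` i.i.d. with
`E|W₀| < ∞`, `(N_n)` integer-valued with `0 ≤ N_n ≤ n`, the three families being mutually
independent, and `P(N_n > m) ≤ δ(m)` with `δ(m) → 0`.  Then for
`S'_n = Σ_{k=1}^{n-N_n} U_k + Σ_{k=1}^{N_n} W_k` (here indexed `k = 0, …`) and any `ε > 0`,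
`P(S'_n < n(μ - ε)) → 0` as `n → ∞`. -/
theorem statement15 {Ω : Type*} [MeasurableSpace Ω] (P : Measure Ω) [IsProbabilityMeasure P]
    (U W : ℕ → Ω → ℝ) (N : ℕ → Ω → ℕ)
    (hUm : ∀ k, Measurable (U k)) (hWm : ∀ k, Measurable (W k)) (hNm : ∀ n, Measurable (N n))
    (hUiid : iIndepFun U P)
    (hUdist : ∀ k, P.map (U k) = P.map (U 0))
    (hUint : Integrable (U 0) P)
    (hWiid : iIndepFun W P)
    (hWdist : ∀ k, P.map (W k) = P.map (W 0))
    (hWint : Integrable (W 0) P)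
    (hNle : ∀ n ω, N n ω ≤ n)
    (hgroups : iIndep
      (fun i : Fin 3 =>
        ![⨆ k, MeasurableSpace.comap (U k) inferInstance,
          ⨆ k, MeasurableSpace.comap (W k) inferInstance,
          ⨆ n, MeasurableSpace.comap (N n) inferInstance] i) P)
    (δ : ℕ → ℝ) (hδmem : ∀ m, δ m ∈ Set.Icc (0:ℝ) 1)
    (hδlim : Tendsto δ atTop (nhds 0))
    (hN : ∀ n m : ℕ, (P {ω | m < N n ω}).toReal ≤ δ m) :
    ∀ ε : ℝ, 0 < ε →
      Tendsto (fun n : ℕ =>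
          (P {ω | (∑ k ∈ Finset.range (n - N n ω), U k ω)
              + (∑ k ∈ Finset.range (N n ω), W k ω)
            < (n : ℝ) * ((∫ x, U 0 x ∂P) - ε)}).toReal)
        atTop (nhds 0) :=
  statement15_general P U W N hUm hWm hUiid hUdist hUint δ hδlim hN
end
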